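/- arXiv:1902.01599 — 7 statements merged into one kernel-verified Lean document; each statement's English description precedes it below -/
import Mathlib

section
/- Let (Ω, F, P) be a probability space, G ⊆ F a sub-σ-algebra, X : Ω → ℝ^q a G-measurable random variable, and f : ℝ^q × ℝ → ℝ a measurable function such that y ↦ f(x, y) is Lipschitz with constant L uniformly in x, and such that f(X, 0) is square integrable. Let h > 0 with hL < 1. Then for every A ∈ L²(Ω, F, P): (i) there exists a P-a.s. unique G-measurable square integrable random variable V such that V = E[A | G] + h f(X, V) a.s.; and (ii) if V, V' are the solutions associated with A, A' ∈ L², then ‖V − V'‖_{L²} ≤ ‖A − A'‖_{L²} / (1 − hL). -/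
open MeasureTheory
open scoped NNReal

section Aux

variable {Ω : Type*} {G : MeasurableSpace Ω} [m0 : MeasurableSpace Ω]

lemma condexp_L2_aux (μ : Measure Ω) [IsProbabilityMeasure μ] (hG : G ≤ m0)
    {g : Ω → ℝ} (hg : MemLp g 2 μ) :
    MemLp (μ[g|G]) 2 μ ∧ eLpNorm (μ[g|G]) 2 μ ≤ eLpNorm g 2 μ := by
  haveI : SigmaFinite (μ.trim hG) := inferInstance
  set F : Lp ℝ 2 μ := hg.toLp g with hF
  have hFg : F =ᵐ[μ] g := hg.coeFn_toLp
  set C : Lp ℝ 2 μ := ↑(condExpL2 ℝ ℝ hG F) with hC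
  have hCint : Integrable (C : Ω → ℝ) μ := (Lp.memLp C).integrable (by norm_num)
  have heq : (C : Ω → ℝ) =ᵐ[μ] μ[g|G] := by
    refine ae_eq_condExp_of_forall_setIntegral_eq hG
      (hg.integrable (by norm_num)) (fun s _ _ => hCint.integrableOn)
      (fun s hs hμs => ?_) ?_
    · rw [hC]
      rw [integral_condExpL2_eq hG F hs hμs.ne]
      exact setIntegral_congr_ae (hG s hs) (hFg.mono fun ω hω _ => hω)
    · exact aestronglyMeasurable_condExpL2 hG F
  have h2 : eLpNorm (C : Ω → ℝ) 2 μ ≤ eLpNorm (F : Ω → ℝ) 2 μ := eLpNorm_condExpL2_le hG F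
  refine ⟨(Lp.memLp C).ae_eq heq, ?_⟩
  calc eLpNorm (μ[g|G]) 2 μ = eLpNorm (C : Ω → ℝ) 2 μ := (eLpNorm_congr_ae heq).symm
  _ ≤ eLpNorm (F : Ω → ℝ) 2 μ := h2
  _ = eLpNorm g 2 μ := eLpNorm_congr_ae hFg

theorem stmt4_aux (μ : Measure Ω) [IsProbabilityMeasure μ] (hG : G ≤ m0)
    (q : ℕ) (X : Ω → EuclideanSpace ℝ (Fin q)) (hX : StronglyMeasurable[G] X)
    (f : EuclideanSpace ℝ (Fin q) → ℝ → ℝ) (L : ℝ≥0)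
    (hfm : Measurable (Function.uncurry f))
    (hfL : ∀ x, LipschitzWith L (f x))
    (hf0 : MemLp (fun ω => f (X ω) 0) 2 μ)
    (h : ℝ) (hh : 0 < h) (hhL : h * (L : ℝ) < 1) :
    (∀ A : Ω → ℝ, MemLp A 2 μ →
      ∃ V : Ω → ℝ, (StronglyMeasurable[G] V ∧ MemLp V 2 μ ∧
          V =ᵐ[μ] fun ω => (μ[A|G]) ω + h * f (X ω) (V ω)) ∧
        ∀ V' : Ω → ℝ, StronglyMeasurable[G] V' → MemLp V' 2 μ →
          (V' =ᵐ[μ] fun ω => (μ[A|G]) ω + h * f (X ω) (V' ω)) → V' =ᵐ[μ] V) ∧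
    (∀ A A' V V' : Ω → ℝ, MemLp A 2 μ → MemLp A' 2 μ →
      StronglyMeasurable[G] V → MemLp V 2 μ →
      StronglyMeasurable[G] V' → MemLp V' 2 μ →
      (V =ᵐ[μ] fun ω => (μ[A|G]) ω + h * f (X ω) (V ω)) →
      (V' =ᵐ[μ] fun ω => (μ[A'|G]) ω + h * f (X ω) (V' ω)) →
      eLpNorm (V - V') 2 μ ≤ eLpNorm (A - A') 2 μ / ENNReal.ofReal (1 - h * (L : ℝ))) := by
  have hL0 : (0 : ℝ) ≤ (L : ℝ) := L.coe_nonneg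
  have hlip : ∀ x (a b : ℝ), |f x a - f x b| ≤ (L : ℝ) * |a - b| := by
    intro x a b
    have := (hfL x).dist_le_mul a b
    rwa [Real.dist_eq, Real.dist_eq] at this
  -- key pointwise estimate
  have key : ∀ (x : EuclideanSpace ℝ (Fin q)) (c c' v v' : ℝ),
      v = c + h * f x v → v' = c' + h * f x v' →
      (1 - h * (L : ℝ)) * |v - v'| ≤ |c - c'| := by
    intro x c c' v v' hv hv'
    have h1 : |v - v'| ≤ |c - c'| + h * ((L : ℝ) * |v - v'|) := by
      have h2 : v - v' = (c - c') + h * (f x v - f x v') := by linear_combination hv - hv'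
      calc |v - v'| ≤ |c - c'| + |h * (f x v - f x v')| := by
            rw [h2]; exact abs_add_le _ _
      _ ≤ |c - c'| + h * ((L : ℝ) * |v - v'|) := by
            rw [abs_mul, abs_of_pos hh]
            have := hlip x v v'
            nlinarith
    nlinarith
  -- the contraction on ℝ for a given constant c and state x
  have hcontr : ∀ (x : EuclideanSpace ℝ (Fin q)) (c : ℝ),
      ContractingWith (h.toNNReal * L) (fun y => c + h * f x y) := by
    intro x c
    constructor
    · rw [← NNReal.coe_lt_one]
      push_cast
      rwa [Real.coe_toNNReal _ hh.le]
    · refine LipschitzWith.of_dist_le_mul fun a b => ?_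
      have : dist (c + h * f x a) (c + h * f x b) = |h * (f x a - f x b)| := by
        rw [Real.dist_eq]; ring_nf
      rw [this, abs_mul, abs_of_pos hh, Real.dist_eq]
      push_cast
      rw [Real.coe_toNNReal _ hh.le]
      have := hlip x a b
      nlinarith
  constructor
  · -- existence and uniqueness
    intro A hA
    set c : Ω → ℝ := μ[A|G] with hc
    have hcmem : MemLp c 2 μ := (condexp_L2_aux μ hG hA).1
    have hcG : StronglyMeasurable[G] c := stronglyMeasurable_condExp
    set V : Ω → ℝ := fun ω =>
      ContractingWith.fixedPoint (fun y => c ω + h * f (X ω) y) (hcontr (X ω) (c ω)) with hV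
    have hVfix : ∀ ω, V ω = c ω + h * f (X ω) (V ω) := fun ω =>
      ((hcontr (X ω) (c ω)).fixedPoint_isFixedPt).symm
    -- measurability via iterates
    have hWmeas : ∀ n : ℕ, StronglyMeasurable[G]
        (fun ω => (fun y => c ω + h * f (X ω) y)^[n] 0) := by
      intro n
      induction n with
      | zero => simpa using stronglyMeasurable_const
      | succ n ih =>
        have : (fun ω => (fun y => c ω + h * f (X ω) y)^[n+1] 0)
            = fun ω => c ω + h * f (X ω) ((fun y => c ω + h * f (X ω) y)^[n] 0) := by
          funext ω; rw [Function.iterate_succ_apply']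
        rw [this]
        have hfXW : Measurable[G] fun ω => f (X ω) ((fun y => c ω + h * f (X ω) y)^[n] 0) :=
          hfm.comp (hX.measurable.prodMk ih.measurable)
        exact hcG.add ((measurable_const.mul hfXW).stronglyMeasurable)
    have hVG : StronglyMeasurable[G] V := by
      refine stronglyMeasurable_of_tendsto Filter.atTop hWmeas (tendsto_pi_nhds.2 fun ω => ?_)
      exact (hcontr (X ω) (c ω)).tendsto_iterate_fixedPoint 0
    -- L² bound
    have hpos : (0:ℝ) < 1 - h * (L : ℝ) := by linarith
    have hVbd : ∀ ω, ‖V ω‖ ≤ ‖(1 - h * (L : ℝ))⁻¹ * (|c ω| + h * |f (X ω) 0|)‖ := by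
      intro ω
      have e := hVfix ω
      have hl := hlip (X ω) (V ω) 0
      have habs : |V ω| = |c ω + h * f (X ω) (V ω)| := by conv_lhs => rw [e]
      have h1 : (1 - h * (L : ℝ)) * |V ω| ≤ |c ω| + h * |f (X ω) 0| := by
        have h3 : |c ω + h * f (X ω) (V ω)| ≤ |c ω| + |h * f (X ω) (V ω)| := abs_add_le _ _
        have h4 : |h * f (X ω) (V ω)| = h * |f (X ω) (V ω)| := by
          rw [abs_mul, abs_of_pos hh]
        have h5 : |f (X ω) (V ω)| ≤ |f (X ω) (V ω) - f (X ω) 0| + |f (X ω) 0| := by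
          nlinarith [abs_add_le (f (X ω) (V ω) - f (X ω) 0) (f (X ω) 0),
            abs_sub_abs_le_abs_sub (f (X ω) (V ω)) (f (X ω) 0), abs_nonneg (f (X ω) 0),
            le_abs_self (f (X ω) (V ω))]
        have h6 : |V ω - 0| = |V ω| := by rw [sub_zero]
        rw [h6] at hl
        nlinarith [abs_nonneg (f (X ω) 0)]
      have h2 : |V ω| ≤ (1 - h * (L : ℝ))⁻¹ * (|c ω| + h * |f (X ω) 0|) := by
        rw [inv_mul_eq_div, le_div_iff₀ hpos]
        nlinarith
      rw [Real.norm_eq_abs, Real.norm_eq_abs]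
      exact h2.trans (le_abs_self _)
    have hBmem : MemLp (fun ω => (1 - h * (L : ℝ))⁻¹ * (|c ω| + h * |f (X ω) 0|)) 2 μ := by
      have h1 : MemLp (fun ω => |c ω|) 2 μ := hcmem.abs
      have h2 : MemLp (fun ω => h * |f (X ω) 0|) 2 μ := hf0.abs.const_mul h
      exact (h1.add h2).const_mul _
    have hVmem : MemLp V 2 μ :=
      hBmem.of_le (hVG.mono hG).aestronglyMeasurable (Filter.Eventually.of_forall hVbd)
    refine ⟨V, ⟨hVG, hVmem, Filter.Eventually.of_forall hVfix⟩, ?_⟩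
    intro V' _ _ hV'eq
    filter_upwards [hV'eq] with ω hω
    have := key (X ω) (c ω) (c ω) (V' ω) (V ω) hω (hVfix ω)
    have h2 : |V' ω - V ω| ≤ 0 := by
      simp only [sub_self, abs_zero] at this
      nlinarith [abs_nonneg (V' ω - V ω)]
    have := abs_nonneg (V' ω - V ω)
    have : V' ω - V ω = 0 := by
      have := abs_eq_zero.mp (le_antisymm h2 (abs_nonneg _))
      exact this
    linarith
  · -- stability
    intro A A' V V' hA hA' hVG hVmem hV'G hV'mem hVeq hV'eq
    have hsub : (fun ω => (μ[A|G]) ω - (μ[A'|G]) ω) =ᵐ[μ] μ[A - A'|G] :=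
      (condExp_sub (hA.integrable (by norm_num)) (hA'.integrable (by norm_num)) G).symm
    have hptwise : ∀ᵐ ω ∂μ, ‖(V - V') ω‖ ≤
        ‖(1 - h * (L : ℝ))⁻¹ * ((μ[A|G]) ω - (μ[A'|G]) ω)‖ := by
      filter_upwards [hVeq, hV'eq] with ω h1 h2
      have hk := key (X ω) ((μ[A|G]) ω) ((μ[A'|G]) ω) (V ω) (V' ω) h1 h2
      have hpos : (0:ℝ) < 1 - h * (L : ℝ) := by linarith
      rw [Pi.sub_apply, Real.norm_eq_abs, Real.norm_eq_abs, abs_mul,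
        abs_of_pos (inv_pos.mpr hpos)]
      rw [inv_mul_eq_div, le_div_iff₀ hpos]
      nlinarith [hk]
    have hpos : (0:ℝ) < 1 - h * (L : ℝ) := by linarith
    calc eLpNorm (V - V') 2 μ
        ≤ eLpNorm (fun ω => (1 - h * (L : ℝ))⁻¹ * ((μ[A|G]) ω - (μ[A'|G]) ω)) 2 μ :=
          eLpNorm_mono_ae hptwise
      _ = eLpNorm ((1 - h * (L : ℝ))⁻¹ • fun ω => ((μ[A|G]) ω - (μ[A'|G]) ω)) 2 μ := rfl
      _ = ‖(1 - h * (L : ℝ))⁻¹‖ₑ * eLpNorm (fun ω => ((μ[A|G]) ω - (μ[A'|G]) ω)) 2 μ :=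
          eLpNorm_const_smul _ _ _ _
      _ = ENNReal.ofReal ((1 - h * (L : ℝ))⁻¹) * eLpNorm (μ[A - A'|G]) 2 μ := by
          rw [eLpNorm_congr_ae hsub,
            Real.enorm_eq_ofReal (inv_nonneg.mpr hpos.le)]
      _ ≤ ENNReal.ofReal ((1 - h * (L : ℝ))⁻¹) * eLpNorm (A - A') 2 μ := by
          gcongr
          exact (condexp_L2_aux μ hG (hA.sub hA')).2
      _ = eLpNorm (A - A') 2 μ / ENNReal.ofReal (1 - h * (L : ℝ)) := by
          rw [ENNReal.ofReal_inv_of_pos hpos, ENNReal.div_eq_inv_mul]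

end Aux

/-- One implicit step of the backward scheme (driver independent of `z`):
given `A ∈ L²`, there is an a.s. unique `G`-measurable `V ∈ L²` with
`V = E[A|G] + h f(X, V)` a.s., and the solution map is Lipschitz from `L²` to `L²`
with constant `1/(1 - hL)`. -/
theorem stmt4 {Ω : Type*} [m0 : MeasurableSpace Ω] (μ : Measure Ω) [IsProbabilityMeasure μ]
    (G : MeasurableSpace Ω) (hG : G ≤ m0)
    (q : ℕ) (X : Ω → EuclideanSpace ℝ (Fin q)) (hX : StronglyMeasurable[G] X)
    (f : EuclideanSpace ℝ (Fin q) → ℝ → ℝ) (L : ℝ≥0)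
    (hfm : Measurable (Function.uncurry f))
    (hfL : ∀ x, LipschitzWith L (f x))
    (hf0 : MemLp (fun ω => f (X ω) 0) 2 μ)
    (h : ℝ) (hh : 0 < h) (hhL : h * (L : ℝ) < 1) :
    (∀ A : Ω → ℝ, MemLp A 2 μ →
      ∃ V : Ω → ℝ, (StronglyMeasurable[G] V ∧ MemLp V 2 μ ∧
          V =ᵐ[μ] fun ω => (μ[A|G]) ω + h * f (X ω) (V ω)) ∧
        ∀ V' : Ω → ℝ, StronglyMeasurable[G] V' → MemLp V' 2 μ →
          (V' =ᵐ[μ] fun ω => (μ[A|G]) ω + h * f (X ω) (V' ω)) → V' =ᵐ[μ] V) ∧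
    (∀ A A' V V' : Ω → ℝ, MemLp A 2 μ → MemLp A' 2 μ →
      StronglyMeasurable[G] V → MemLp V 2 μ →
      StronglyMeasurable[G] V' → MemLp V' 2 μ →
      (V =ᵐ[μ] fun ω => (μ[A|G]) ω + h * f (X ω) (V ω)) →
      (V' =ᵐ[μ] fun ω => (μ[A'|G]) ω + h * f (X ω) (V' ω)) →
      eLpNorm (V - V') 2 μ ≤ eLpNorm (A - A') 2 μ / ENNReal.ofReal (1 - h * (L : ℝ))) := by
  exact @stmt4_aux Ω G m0 μ ‹_› hG q X hX f L hfm hfL hf0 h hh hhL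
end

section
/- Let (Ω, F, P) be a probability space, G ⊆ F a sub-σ-algebra, h > 0, and Δ : Ω → ℝ^d a square-integrable random vector with E[Δ | G] = 0 a.s. and E[Δ_k² | G] ≤ h a.s. for each coordinate k = 1, …, d. Let A ∈ L²(Ω, F, P) be real-valued and define the G-measurable random vector Z̄ := (1/h) E[A Δ | G]. Then h · E[|Z̄|²] ≤ d · ( E[A²] − E[ (E[A | G])² ] ). -/
open MeasureTheory

section Aux

variable {Ω : Type*} {m0 : MeasurableSpace Ω} {μ : Measure Ω} [IsFiniteMeasure μ]
  {G : MeasurableSpace Ω}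

omit [IsFiniteMeasure μ] in
lemma aux_mul_integrable {f g : Ω → ℝ} (hf : MemLp f 2 μ) (hg : MemLp g 2 μ) :
    Integrable (fun ω => f ω * g ω) μ := by
  have h1 : (1 : ENNReal) / 1 = 1 / 2 + 1 / 2 := by
    rw [one_div_one, ENNReal.add_halves]
  have := memLp_one_iff_integrable.mp (hg.smul (φ := f) (r := 1) hf (hpqr := ⟨by rw [inv_one, ← one_div, ENNReal.add_halves]⟩))
  exact this

/-- Conditional Cauchy–Schwarz. -/
lemma aux_cond_cauchy_schwarz (hG : G ≤ m0) {X Y : Ω → ℝ}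
    (hX : MemLp X 2 μ) (hY : MemLp Y 2 μ) :
    ∀ᵐ ω ∂μ, ((μ[fun ω' => X ω' * Y ω'|G]) ω) ^ 2 ≤
      (μ[fun ω' => X ω' ^ 2|G]) ω * (μ[fun ω' => Y ω' ^ 2|G]) ω := by
  haveI : IsFiniteMeasure (μ.trim hG) := isFiniteMeasure_trim hG
  haveI : SigmaFinite (μ.trim hG) := inferInstance
  have hX2 : Integrable (fun ω => X ω ^ 2) μ := hX.integrable_sq
  have hY2 : Integrable (fun ω => Y ω ^ 2) μ := hY.integrable_sq
  have hXY : Integrable (fun ω => X ω * Y ω) μ := aux_mul_integrable hX hY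
  have key : ∀ q : ℚ, ∀ᵐ ω ∂μ,
      0 ≤ (μ[fun ω' => X ω' ^ 2|G]) ω * ((q : ℝ) * q)
        + 2 * (μ[fun ω' => X ω' * Y ω'|G]) ω * q + (μ[fun ω' => Y ω' ^ 2|G]) ω := by
    intro q
    have h0 : (0 : Ω → ℝ) ≤ᵐ[μ] μ[fun ω' => ((q : ℝ) * X ω' + Y ω') ^ 2|G] :=
      condExp_nonneg (Filter.Eventually.of_forall fun ω => sq_nonneg _)
    have e1 : (fun ω' => ((q : ℝ) * X ω' + Y ω') ^ 2)
        = ((q : ℝ) * q) • (fun ω' => X ω' ^ 2)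
          + ((2 * (q : ℝ)) • (fun ω' => X ω' * Y ω') + fun ω' => Y ω' ^ 2) := by
      funext ω'
      simp only [Pi.add_apply, Pi.smul_apply, smul_eq_mul]
      ring
    have h1 := condExp_add (μ := μ) (m := G) (hX2.smul ((q : ℝ) * q))
      ((hXY.smul (2 * (q : ℝ))).add hY2)
    have h2 := condExp_add (μ := μ) (m := G) (hXY.smul (2 * (q : ℝ))) hY2
    have h3 := condExp_smul (μ := μ) (m := G) ((q : ℝ) * q) (fun ω' => X ω' ^ 2)
    have h4 := condExp_smul (μ := μ) (m := G) (2 * (q : ℝ)) (fun ω' => X ω' * Y ω')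
    rw [e1] at h0
    filter_upwards [h0, h1, h2, h3, h4] with ω e0 e1' e2 e3 e4
    simp only [Pi.add_apply, Pi.smul_apply, Pi.zero_apply, smul_eq_mul] at e0 e1' e2 e3 e4
    rw [e1', e2, e3, e4] at e0
    nlinarith [e0]
  have hkey := ae_all_iff.2 key
  filter_upwards [hkey] with ω hω
  set a := (μ[fun ω' => X ω' ^ 2|G]) ω with ha
  set b := (μ[fun ω' => X ω' * Y ω'|G]) ω with hb
  set c := (μ[fun ω' => Y ω' ^ 2|G]) ω with hc
  have hall : ∀ t : ℝ, 0 ≤ a * (t * t) + (2 * b) * t + c := by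
    have hcont : Continuous fun t : ℝ => a * (t * t) + (2 * b) * t + c := by continuity
    have hcl : IsClosed {t : ℝ | 0 ≤ a * (t * t) + (2 * b) * t + c} :=
      isClosed_le continuous_const hcont
    intro t
    have hmem : t ∈ closure (Set.range ((↑) : ℚ → ℝ)) := Rat.denseRange_cast t
    have hsub : Set.range ((↑) : ℚ → ℝ) ⊆ {t : ℝ | 0 ≤ a * (t * t) + (2 * b) * t + c} := by
      rintro _ ⟨q, rfl⟩
      have := hω q
      simp only [Set.mem_setOf_eq]
      nlinarith [this]
    exact closure_minimal hsub hcl hmem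
  have hd := discrim_le_zero hall
  rw [discrim] at hd
  nlinarith [hd]

end Aux

/-- Bound on the discrete `Z`-component: if `Δ` is centered given `G` with conditional
second moments bounded by `h`, and `Z̄ = (1/h) E[A Δ | G]`, then
`h E[|Z̄|²] ≤ d (E[A²] - E[(E[A|G])²])`. -/
theorem stmt5 {Ω : Type*} [m0 : MeasurableSpace Ω] (μ : Measure Ω) [IsProbabilityMeasure μ]
    (G : MeasurableSpace Ω) (hG : G ≤ m0)
    (d : ℕ) (h : ℝ) (hh : 0 < h)
    (Δ : Ω → EuclideanSpace ℝ (Fin d)) (hΔ : MemLp Δ 2 μ)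
    (hΔ0 : ∀ k, μ[fun ω => Δ ω k|G] =ᵐ[μ] 0)
    (hΔ2 : ∀ k, μ[fun ω => (Δ ω k) ^ 2|G] ≤ᵐ[μ] fun _ => h)
    (A : Ω → ℝ) (hA : MemLp A 2 μ)
    (Zbar : Ω → EuclideanSpace ℝ (Fin d))
    (hZbar : ∀ k, (fun ω => Zbar ω k) =
      fun ω => (1 / h) * (μ[fun ω' => A ω' * Δ ω' k|G]) ω) :
    h * ∫ ω, ‖Zbar ω‖ ^ 2 ∂μ ≤
      (d : ℝ) * ((∫ ω, (A ω) ^ 2 ∂μ) - ∫ ω, ((μ[A|G]) ω) ^ 2 ∂μ) := by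
  haveI : IsFiniteMeasure (μ.trim hG) := isFiniteMeasure_trim hG
  haveI : SigmaFinite (μ.trim hG) := inferInstance
  set Abar : Ω → ℝ := μ[A|G] with hAbar_def
  have hAint : Integrable A μ := hA.integrable one_le_two
  have hA2 : Integrable (fun ω => A ω ^ 2) μ := hA.integrable_sq
  -- Abar is in L²
  have hAbar_meas : StronglyMeasurable[G] Abar := stronglyMeasurable_condExp
  have hAbar_aesm : AEStronglyMeasurable[m0] Abar μ :=
    (hAbar_meas.mono hG).aestronglyMeasurable
  have hJensen : ∀ᵐ ω ∂μ, (Abar ω) ^ 2 ≤ (μ[fun ω' => A ω' ^ 2|G]) ω := by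
    have hcs := aux_cond_cauchy_schwarz hG hA (memLp_const (1 : ℝ))
    have e1 : (fun ω' => A ω' * (fun _ : Ω => (1:ℝ)) ω') = A := by funext ω'; simp
    have e2 : (fun ω' => ((fun _ : Ω => (1:ℝ)) ω') ^ 2) = fun _ : Ω => (1:ℝ) := by
      funext ω'; simp
    rw [e1, e2, condExp_const hG (1 : ℝ)] at hcs
    filter_upwards [hcs] with ω hω
    simpa using hω
  have hAbar2int : Integrable (fun ω => Abar ω ^ 2) μ := by
    have hmaj : Integrable (μ[fun ω' => A ω' ^ 2|G]) μ := integrable_condExp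
    refine Integrable.mono' hmaj (hAbar_aesm.pow 2) ?_
    filter_upwards [hJensen] with ω hω
    rwa [Real.norm_eq_abs, abs_of_nonneg (sq_nonneg _)]
  have hAbar2 : MemLp Abar 2 μ :=
    (memLp_two_iff_integrable_sq hAbar_aesm).mpr hAbar2int
  set B : Ω → ℝ := fun ω => A ω - Abar ω with hB_def
  have hB : MemLp B 2 μ := hA.sub hAbar2
  have hB2 : Integrable (fun ω => B ω ^ 2) μ := hB.integrable_sq
  -- ∫ A * Abar = ∫ Abar ^ 2
  have hAAbar : Integrable (fun ω => Abar ω * A ω) μ := aux_mul_integrable hAbar2 hA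
  have hprod : ∫ ω, A ω * Abar ω ∂μ = ∫ ω, Abar ω ^ 2 ∂μ := by
    have hpull : μ[Abar * A|G] =ᵐ[μ] Abar * μ[A|G] :=
      condExp_mul_of_stronglyMeasurable_left hAbar_meas hAAbar hAint
    calc ∫ ω, A ω * Abar ω ∂μ = ∫ ω, (Abar * A) ω ∂μ := by
          simp only [Pi.mul_apply]; congr 1; funext ω; ring
      _ = ∫ ω, (μ[Abar * A|G]) ω ∂μ := (integral_condExp hG).symm
      _ = ∫ ω, (Abar * μ[A|G]) ω ∂μ := integral_congr_ae hpull
      _ = ∫ ω, Abar ω ^ 2 ∂μ := by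
          congr 1; funext ω; simp [← hAbar_def, sq]
  have hBvar : ∫ ω, B ω ^ 2 ∂μ = (∫ ω, A ω ^ 2 ∂μ) - ∫ ω, Abar ω ^ 2 ∂μ := by
    have e : (fun ω => B ω ^ 2)
        = fun ω => (A ω ^ 2 - 2 * (A ω * Abar ω)) + Abar ω ^ 2 := by
      funext ω; simp only [hB_def]; ring
    have i2 : Integrable (fun ω => 2 * (A ω * Abar ω)) μ :=
      (aux_mul_integrable hA hAbar2).const_mul 2
    have i1 : Integrable (fun ω => A ω ^ 2 - 2 * (A ω * Abar ω)) μ := hA2.sub i2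
    rw [e, integral_add i1 hAbar2int, integral_sub hA2 i2, integral_const_mul, hprod]
    ring
  -- per-coordinate analysis
  have hΔk : ∀ k, MemLp (fun ω => Δ ω k) 2 μ := by
    intro k
    have := (EuclideanSpace.proj (𝕜 := ℝ) k).comp_memLp' hΔ
    exact this
  have hbound : ∀ k, ∀ᵐ ω ∂μ, (Zbar ω k) ^ 2 ≤ (1 / h) * (μ[fun ω' => B ω' ^ 2|G]) ω := by
    intro k
    have hAΔ : Integrable (fun ω => A ω * Δ ω k) μ := aux_mul_integrable hA (hΔk k)
    have hBΔ : Integrable (fun ω => B ω * Δ ω k) μ := aux_mul_integrable hB (hΔk k)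
    have hAbarΔ : Integrable (fun ω => Abar ω * Δ ω k) μ := aux_mul_integrable hAbar2 (hΔk k)
    -- E[AΔ|G] = E[BΔ|G]
    have hsplit : (fun ω => A ω * Δ ω k)
        = (fun ω => B ω * Δ ω k) + fun ω => Abar ω * Δ ω k := by
      funext ω; simp only [Pi.add_apply, hB_def]; ring
    have hpull : μ[Abar * fun ω => Δ ω k|G] =ᵐ[μ] Abar * μ[fun ω => Δ ω k|G] :=
      condExp_mul_of_stronglyMeasurable_left hAbar_meas hAbarΔ
        ((hΔk k).integrable one_le_two)
    have h1k : μ[fun ω => A ω * Δ ω k|G] =ᵐ[μ] μ[fun ω => B ω * Δ ω k|G] := by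
      rw [hsplit]
      refine (condExp_add hBΔ hAbarΔ G).trans ?_
      have : μ[fun ω => Abar ω * Δ ω k|G] =ᵐ[μ] 0 := by
        have hp : μ[fun ω => Abar ω * Δ ω k|G] =ᵐ[μ] Abar * μ[fun ω => Δ ω k|G] := hpull
        filter_upwards [hp, hΔ0 k] with ω h1 h2
        rw [h1]
        simp only [Pi.mul_apply, h2, Pi.zero_apply, mul_zero]
      filter_upwards [this] with ω hω
      simp [hω]
    have hcs := aux_cond_cauchy_schwarz hG hB (hΔk k)
    have hBnn : (0 : Ω → ℝ) ≤ᵐ[μ] μ[fun ω' => B ω' ^ 2|G] :=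
      condExp_nonneg (Filter.Eventually.of_forall fun ω => sq_nonneg _)
    filter_upwards [h1k, hcs, hΔ2 k, hBnn] with ω e1 e2 e3 e4
    have hZω : Zbar ω k = (1 / h) * (μ[fun ω' => A ω' * Δ ω' k|G]) ω := congrFun (hZbar k) ω
    simp only [Pi.zero_apply] at e4
    rw [hZω, e1]
    set x := (μ[fun ω => B ω * Δ ω k|G]) ω
    set aa := (μ[fun ω' => B ω' ^ 2|G]) ω
    have hx : x ^ 2 ≤ aa * h := by
      refine e2.trans ?_
      exact mul_le_mul_of_nonneg_left e3 e4
    have hinv : (1 / h) * h = 1 := by field_simp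
    nlinarith [mul_le_mul_of_nonneg_left hx (sq_nonneg (1 / h)), sq_nonneg (1/h), hh.le]
  have hZmeas : ∀ k, AEStronglyMeasurable[m0] (fun ω => (Zbar ω k) ^ 2) μ := by
    intro k
    have e : (fun ω => (Zbar ω k) ^ 2)
        = fun ω => ((1 / h) * (μ[fun ω' => A ω' * Δ ω' k|G]) ω) ^ 2 := by
      funext ω; rw [congrFun (hZbar k) ω]
    rw [e]
    exact ((((stronglyMeasurable_condExp.mono hG).aestronglyMeasurable).const_mul (1/h)).pow 2)
  have hZint : ∀ k, Integrable (fun ω => (Zbar ω k) ^ 2) μ := by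
    intro k
    refine Integrable.mono' ((integrable_condExp (m := G) (f := fun ω' => B ω' ^ 2) (μ := μ)).const_mul (1 / h)) (hZmeas k) ?_
    filter_upwards [hbound k] with ω hω
    rwa [Real.norm_eq_abs, abs_of_nonneg (sq_nonneg _)]
  have hint : ∀ k, ∫ ω, (Zbar ω k) ^ 2 ∂μ ≤ (1 / h) * ∫ ω, B ω ^ 2 ∂μ := by
    intro k
    calc ∫ ω, (Zbar ω k) ^ 2 ∂μ
        ≤ ∫ ω, (1 / h) * (μ[fun ω' => B ω' ^ 2|G]) ω ∂μ :=
          integral_mono_ae (hZint k) ((integrable_condExp (m := G) (f := fun ω' => B ω' ^ 2) (μ := μ)).const_mul (1 / h)) (hbound k)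
      _ = (1 / h) * ∫ ω, (μ[fun ω' => B ω' ^ 2|G]) ω ∂μ := integral_const_mul _ _
      _ = (1 / h) * ∫ ω, B ω ^ 2 ∂μ := by rw [integral_condExp hG]
  have hnorm : ∀ ω, ‖Zbar ω‖ ^ 2 = ∑ k, (Zbar ω k) ^ 2 := by
    intro ω
    rw [EuclideanSpace.norm_eq, Real.sq_sqrt (by positivity)]
    simp [sq_abs]
  have hsplitint : ∫ ω, ‖Zbar ω‖ ^ 2 ∂μ = ∑ k, ∫ ω, (Zbar ω k) ^ 2 ∂μ := by
    rw [← integral_finset_sum _ fun k _ => hZint k]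
    exact integral_congr_ae (Filter.Eventually.of_forall fun ω => hnorm ω)
  have hsum : ∫ ω, ‖Zbar ω‖ ^ 2 ∂μ ≤ (d : ℝ) * ((1 / h) * ∫ ω, B ω ^ 2 ∂μ) := by
    rw [hsplitint]
    calc ∑ k, ∫ ω, (Zbar ω k) ^ 2 ∂μ
        ≤ ∑ _k : Fin d, (1 / h) * ∫ ω, B ω ^ 2 ∂μ := Finset.sum_le_sum fun k _ => hint k
      _ = (d : ℝ) * ((1 / h) * ∫ ω, B ω ^ 2 ∂μ) := by
          rw [Finset.sum_const, Finset.card_univ, Fintype.card_fin, nsmul_eq_mul]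
  have hfin : h * ∫ ω, ‖Zbar ω‖ ^ 2 ∂μ ≤ (d : ℝ) * ∫ ω, B ω ^ 2 ∂μ := by
    have := mul_le_mul_of_nonneg_left hsum hh.le
    calc h * ∫ ω, ‖Zbar ω‖ ^ 2 ∂μ
        ≤ h * ((d : ℝ) * ((1 / h) * ∫ ω, B ω ^ 2 ∂μ)) := this
      _ = (d : ℝ) * ∫ ω, B ω ^ 2 ∂μ := by field_simp
  rw [hBvar] at hfin
  exact hfin
end

section
/- Let (Ω, F, P) be a probability space, G ⊆ F a sub-σ-algebra, h > 0, and Δ : Ω → ℝ^d a square-integrable random vector with E[Δ | G] = 0 a.s. and E[Δ_k Δ_l | G] = h δ_{kl} a.s. Let X be G-measurable ℝ^q-valued, f : ℝ^q × ℝ × ℝ^d → ℝ measurable, Lipschitz in (y, z) with constant L uniformly in x, with f(X, 0, 0) ∈ L², and let hL < 1. Let A ∈ L², Z̄ := (1/h) E[A Δ | G], and V the G-measurable solution of V = E[A | G] + h f(X, V, Z̄). Then for every G-measurable U ∈ L²(ℝ) and G-measurable Z ∈ L²(ℝ^d), the quadratic loss L̂(U, Z) := E[ |A − U + f(X, U,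 Z) h − Zᵀ Δ|² ] satisfies the decomposition L̂(U, Z) = E[ |V − U + ( f(X, U, Z) − f(X, V, Z̄) ) h|² ] + h E[ |Z − Z̄|² ] + κ, where κ := E[ |A − E[A | G]|² ] − h E[ |Z̄|² ] does not depend on (U, Z). -/
open MeasureTheory
open scoped NNReal


lemma dbdp_mul2 {Ω : Type*} {m0 : MeasurableSpace Ω} {μ : Measure Ω} {f g : Ω → ℝ}
    (hf : MemLp f 2 μ) (hg : MemLp g 2 μ) :
    Integrable (fun ω => f ω * g ω) μ := by
  refine Integrable.mono' (((hf.integrable_sq.add hg.integrable_sq)).const_mul (1/2))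
    (hf.1.mul hg.1) (.of_forall fun ω => ?_)
  simp only [Pi.add_apply]
  rw [Real.norm_eq_abs, abs_mul]
  nlinarith [sq_nonneg (|f ω| - |g ω|), sq_abs (f ω), sq_abs (g ω)]

lemma dbdp_pullout {Ω : Type*} {m0 : MeasurableSpace Ω} {μ : Measure Ω}
    {G : MeasurableSpace Ω} (hG : G ≤ m0) (hsf : SigmaFinite (μ.trim hG))
    {W g : Ω → ℝ} (hWm : StronglyMeasurable[G] W)
    (hWg : Integrable (fun ω => W ω * g ω) μ) (hg : Integrable g μ) :
    ∫ ω, W ω * g ω ∂μ = ∫ ω, W ω * (μ[g|G]) ω ∂μ := by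
  haveI := hsf
  have h1 : μ[fun ω => W ω * g ω|G] =ᵐ[μ] fun ω => W ω * (μ[g|G]) ω :=
    condExp_mul_of_stronglyMeasurable_left hWm hWg hg
  rw [← integral_condExp hG (f := fun ω => W ω * g ω)]
  exact integral_congr_ae h1

lemma dbdp_int_mul {Ω : Type*} {m0 : MeasurableSpace Ω} {μ : Measure Ω}
    {G : MeasurableSpace Ω} (hG : G ≤ m0) (hsf : SigmaFinite (μ.trim hG))
    {W g : Ω → ℝ} (hWm : StronglyMeasurable[G] W)
    (hWi : Integrable W μ) (hW0 : ∀ ω, 0 ≤ W ω) (hgi : Integrable g μ)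
    (hg0 : ∀ ω, 0 ≤ g ω) {C : ℝ} (hC0 : 0 ≤ C) (hC : μ[g|G] ≤ᵐ[μ] fun _ => C) :
    Integrable (fun ω => W ω * g ω) μ := by
  set Wn : ℕ → Ω → ℝ := fun n ω => min (W ω) n with hWn
  have hWn_meas : ∀ n, StronglyMeasurable[G] (Wn n) :=
    fun n => (hWm.measurable.min (@measurable_const ℝ Ω _ G _)).stronglyMeasurable
  have hWn0 : ∀ n ω, 0 ≤ Wn n ω := fun n ω => le_min (hW0 ω) (n.cast_nonneg)
  have hWn_le : ∀ n ω, Wn n ω ≤ W ω := fun n ω => min_le_left _ _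
  have hWn_bdd : ∀ n ω, ‖Wn n ω‖ ≤ (n : ℝ) := fun n ω => by
    rw [Real.norm_eq_abs, abs_of_nonneg (hWn0 n ω)]; exact min_le_right _ _
  have hWn_int : ∀ n, Integrable (Wn n) μ := fun n =>
    hWi.mono' ((hWn_meas n).mono hG).aestronglyMeasurable
      (.of_forall fun ω => by
        rw [Real.norm_eq_abs, abs_of_nonneg (hWn0 n ω)]
        exact hWn_le n ω)
  have hWng_int : ∀ n, Integrable (fun ω => Wn n ω * g ω) μ := fun n =>
    hgi.bdd_mul ((hWn_meas n).mono hG).aestronglyMeasurable (.of_forall (hWn_bdd n))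
  have hbound : ∀ n, ∫ ω, Wn n ω * g ω ∂μ ≤ C * ∫ ω, W ω ∂μ := by
    intro n
    rw [dbdp_pullout hG hsf (hWn_meas n) (hWng_int n) hgi]
    have h1 : ∫ ω, Wn n ω * (μ[g|G]) ω ∂μ ≤ ∫ ω, Wn n ω * C ∂μ := by
      refine integral_mono_ae
        (integrable_condExp.bdd_mul ((hWn_meas n).mono hG).aestronglyMeasurable
          (.of_forall (hWn_bdd n))) ((hWn_int n).mul_const C) ?_
      filter_upwards [hC] with ω hω
      exact mul_le_mul_of_nonneg_left hω (hWn0 n ω)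
    refine h1.trans ?_
    simp_rw [mul_comm (Wn _ _) C]
    rw [integral_const_mul]
    exact mul_le_mul_of_nonneg_left
      (integral_mono (hWn_int n) hWi (fun ω => hWn_le n ω)) hC0
  have hmeas : AEStronglyMeasurable[m0] (fun ω => W ω * g ω) μ :=
    ((hWm.mono hG).aestronglyMeasurable).mul hgi.1
  refine ⟨hmeas, ?_⟩
  rw [hasFiniteIntegral_iff_norm]
  have hnn : ∀ ω, 0 ≤ W ω * g ω := fun ω => mul_nonneg (hW0 ω) (hg0 ω)
  have heq : ∀ ω, ENNReal.ofReal ‖W ω * g ω‖ = ⨆ n, ENNReal.ofReal (Wn n ω * g ω) := by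
    intro ω
    rw [Real.norm_eq_abs, abs_of_nonneg (hnn ω)]
    refine le_antisymm ?_ (iSup_le fun n => ENNReal.ofReal_le_ofReal
      (mul_le_mul_of_nonneg_right (hWn_le n ω) (hg0 ω)))
    refine le_iSup_of_le ⌈W ω⌉₊ (le_of_eq ?_)
    congr 2
    exact (min_eq_left (Nat.le_ceil _)).symm
  calc ∫⁻ ω, ENNReal.ofReal ‖W ω * g ω‖ ∂μ
      = ∫⁻ ω, ⨆ n, ENNReal.ofReal (Wn n ω * g ω) ∂μ := lintegral_congr heq
    _ = ⨆ n, ∫⁻ ω, ENNReal.ofReal (Wn n ω * g ω) ∂μ := by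
        refine lintegral_iSup' (fun n => ?_) (.of_forall fun ω n m hnm => ?_)
        · exact ((hWng_int n).1.aemeasurable).ennreal_ofReal
        · exact ENNReal.ofReal_le_ofReal
            (mul_le_mul_of_nonneg_right (min_le_min le_rfl (Nat.cast_le.2 hnm)) (hg0 ω))
    _ ≤ ENNReal.ofReal (C * ∫ ω, W ω ∂μ) := by
        refine iSup_le fun n => ?_
        rw [← ofReal_integral_eq_lintegral_ofReal (hWng_int n)
          (.of_forall fun ω => mul_nonneg (hWn0 n ω) (hg0 ω))]
        exact ENNReal.ofReal_le_ofReal (hbound n)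
    _ < ⊤ := ENNReal.ofReal_lt_top

/-- conditional Cauchy-Schwarz: `E[AB|G]² ≤ c·E[A²|G]` when `E[B²|G] = c`. -/
lemma dbdp_condCS {Ω : Type*} {m0 : MeasurableSpace Ω} {μ : Measure Ω}
    {G : MeasurableSpace Ω} (hG : G ≤ m0) (hsf : SigmaFinite (μ.trim hG))
    {A B : Ω → ℝ} (hA : MemLp A 2 μ) (hB : MemLp B 2 μ)
    {c : ℝ} (hB2 : μ[fun ω => B ω * B ω|G] =ᵐ[μ] fun _ => c) :
    ∀ᵐ ω ∂μ, ((μ[fun ω' => A ω' * B ω'|G]) ω) ^ 2 ≤ c * (μ[fun ω' => A ω' * A ω'|G]) ω := by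
  haveI := hsf
  have hAA : Integrable (fun ω => A ω * A ω) μ := dbdp_mul2 hA hA
  have hAB : Integrable (fun ω => A ω * B ω) μ := dbdp_mul2 hA hB
  have hBB : Integrable (fun ω => B ω * B ω) μ := dbdp_mul2 hB hB
  have key : ∀ t : ℚ, ∀ᵐ ω ∂μ,
      0 ≤ (t : ℝ)^2 * (μ[fun ω' => A ω' * A ω'|G]) ω
        + 2 * t * (μ[fun ω' => A ω' * B ω'|G]) ω + c := by
    intro t
    have h1 : (0 : Ω → ℝ) ≤ᵐ[μ]
        μ[fun ω => ((t : ℝ) * A ω + B ω) * ((t : ℝ) * A ω + B ω)|G] :=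
      condExp_nonneg (.of_forall fun ω => mul_self_nonneg _)
    set F1 : Ω → ℝ := ((t:ℝ)^2) • (fun ω => A ω * A ω) with hF1
    set F2 : Ω → ℝ := (2*(t:ℝ)) • (fun ω => A ω * B ω) with hF2
    set F3 : Ω → ℝ := fun ω => B ω * B ω with hF3
    have he : (fun ω => ((t : ℝ) * A ω + B ω) * ((t : ℝ) * A ω + B ω))
        = (F1 + F2) + F3 := by
      funext ω
      simp only [hF1, hF2, hF3, Pi.add_apply, Pi.smul_apply, smul_eq_mul]
      ring
    have hiF1 : Integrable F1 μ := hAA.smul _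
    have hiF2 : Integrable F2 μ := hAB.smul _
    have h3 := condExp_add (μ := μ) (m := G) (hiF1.add hiF2) hBB
    have h3' := condExp_add (μ := μ) (m := G) hiF1 hiF2
    have h4 : μ[F1|G] =ᵐ[μ] ((t:ℝ)^2) • μ[fun x => A x * A x|G] := condExp_smul _ _ _
    have h5 : μ[F2|G] =ᵐ[μ] (2*(t:ℝ)) • μ[fun x => A x * B x|G] := condExp_smul _ _ _
    rw [he] at h1
    filter_upwards [h1, h3, h3', h4, h5, hB2] with ω h1 h3 h3' h4 h5 hB2'
    simp only [Pi.add_apply, Pi.smul_apply, Pi.zero_apply, smul_eq_mul] at *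
    rw [h3, h3', h4, h5, hB2'] at h1
    linarith
  rw [← ae_all_iff] at key
  have hc0 : ∀ᵐ ω ∂μ, 0 ≤ (μ[fun ω' => A ω' * A ω'|G]) ω :=
    condExp_nonneg (.of_forall fun ω => mul_self_nonneg _)
  filter_upwards [key, hc0] with ω hω ha
  set a := (μ[fun ω' => A ω' * A ω'|G]) ω
  set b := (μ[fun ω' => A ω' * B ω'|G]) ω
  have hall : ∀ t : ℝ, 0 ≤ a * (t * t) + (2 * b) * t + c := by
    have hclosed : IsClosed {t : ℝ | 0 ≤ a * (t * t) + (2 * b) * t + c} :=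
      isClosed_le continuous_const (by fun_prop)
    have hsub : Set.range ((↑) : ℚ → ℝ) ⊆ {t : ℝ | 0 ≤ a * (t * t) + (2 * b) * t + c} := by
      rintro x ⟨q, rfl⟩
      simp only [Set.mem_setOf_eq]
      nlinarith [hω q]
    intro t
    have : closure (Set.range ((↑) : ℚ → ℝ)) ⊆ {t : ℝ | 0 ≤ a * (t * t) + (2 * b) * t + c} :=
      hclosed.closure_subset_iff.2 hsub
    exact this (by rw [Rat.denseRange_cast.closure_eq]; exact Set.mem_univ t)
  have hd := discrim_le_zero hall
  rw [discrim] at hd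
  nlinarith [hd]

/-- Orthogonal decomposition of the expected quadratic loss of the DBDP1 scheme:
`L̂(U,Z) = E[|V - U + (f(X,U,Z) - f(X,V,Z̄)) h|²] + h E[|Z - Z̄|²] + κ`,
where `κ = E[|A - E[A|G]|²] - h E[|Z̄|²]` does not depend on `(U, Z)`. -/
theorem stmt7 {Ω : Type*} [m0 : MeasurableSpace Ω] (μ : Measure Ω) [IsProbabilityMeasure μ]
    (G : MeasurableSpace Ω) (hG : G ≤ m0)
    (d q : ℕ) (h : ℝ) (hh : 0 < h)
    (Δ : Ω → EuclideanSpace ℝ (Fin d)) (hΔ : MemLp Δ 2 μ)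
    (hΔ0 : ∀ k, μ[fun ω => Δ ω k|G] =ᵐ[μ] 0)
    (hΔ2 : ∀ k l, μ[fun ω => Δ ω k * Δ ω l|G] =ᵐ[μ] fun _ => if k = l then h else 0)
    (X : Ω → EuclideanSpace ℝ (Fin q)) (hX : StronglyMeasurable[G] X)
    (f : EuclideanSpace ℝ (Fin q) → ℝ → EuclideanSpace ℝ (Fin d) → ℝ) (L : ℝ≥0)
    (hfm : Measurable (fun p : EuclideanSpace ℝ (Fin q) × ℝ × EuclideanSpace ℝ (Fin d) =>
      f p.1 p.2.1 p.2.2))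
    (hfL : ∀ x, LipschitzWith L (fun p : ℝ × EuclideanSpace ℝ (Fin d) => f x p.1 p.2))
    (hf0 : MemLp (fun ω => f (X ω) 0 0) 2 μ)
    (hhL : h * (L : ℝ) < 1)
    (A : Ω → ℝ) (hA : MemLp A 2 μ)
    (Zbar : Ω → EuclideanSpace ℝ (Fin d))
    (hZbar : ∀ k, (fun ω => Zbar ω k) = fun ω => (1 / h) * (μ[fun ω' => A ω' * Δ ω' k|G]) ω)
    (V : Ω → ℝ) (hVm : StronglyMeasurable[G] V) (hV2 : MemLp V 2 μ)
    (hV : V =ᵐ[μ] fun ω => (μ[A|G]) ω + h * f (X ω) (V ω) (Zbar ω)) :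
    ∀ (U : Ω → ℝ) (Z : Ω → EuclideanSpace ℝ (Fin d)),
      StronglyMeasurable[G] U → MemLp U 2 μ →
      StronglyMeasurable[G] Z → MemLp Z 2 μ →
      ∫ ω, (A ω - U ω + f (X ω) (U ω) (Z ω) * h - (inner ℝ (Z ω) (Δ ω) : ℝ)) ^ 2 ∂μ =
        (∫ ω, (V ω - U ω + (f (X ω) (U ω) (Z ω) - f (X ω) (V ω) (Zbar ω)) * h) ^ 2 ∂μ)
        + h * ∫ ω, ‖Z ω - Zbar ω‖ ^ 2 ∂μ
        + ((∫ ω, (A ω - (μ[A|G]) ω) ^ 2 ∂μ) - h * ∫ ω, ‖Zbar ω‖ ^ 2 ∂μ) := by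
  intro U Z hUm hU2 hZm hZ2
  have hsf : SigmaFinite (μ.trim hG) := inferInstance
  set Ab : Ω → ℝ := μ[A|G] with hAb
  have hAint : Integrable A μ := hA.integrable one_le_two
  have hnormsq : ∀ x : EuclideanSpace ℝ (Fin d), ‖x‖^2 = ∑ k, (x k)^2 := by
    intro x
    rw [EuclideanSpace.norm_eq, Real.sq_sqrt (Finset.sum_nonneg fun i _ => sq_nonneg _)]
    simp [sq_abs]
  -- coordinate functions
  have hZk2 : ∀ k, MemLp (fun ω => Z ω k) 2 μ := fun k =>
    (EuclideanSpace.proj k (𝕜 := ℝ) : EuclideanSpace ℝ (Fin d) →L[ℝ] ℝ).comp_memLp' hZ2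
  have hΔk2 : ∀ k, MemLp (fun ω => Δ ω k) 2 μ := fun k =>
    (EuclideanSpace.proj k (𝕜 := ℝ) : EuclideanSpace ℝ (Fin d) →L[ℝ] ℝ).comp_memLp' hΔ
  have hZkm : ∀ k, StronglyMeasurable[G] (fun ω => Z ω k) := fun k =>
    ((measurable_pi_iff.1 ((WithLp.measurable_ofLp 2 _).comp hZm.measurable)) k).stronglyMeasurable
  -- `Ab ∈ L²`
  have hone : (μ[fun _ => (1:ℝ) * 1|G]) = fun _ => (1:ℝ) := by
    rw [show (fun _ : Ω => (1:ℝ) * 1) = fun _ : Ω => (1:ℝ) by funext; ring]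
    exact condExp_const hG 1
  have hcs1 := dbdp_condCS hG hsf hA (memLp_const (1:ℝ)) (c := 1) (by rw [hone])
  have hAbsq : Integrable (fun ω => Ab ω ^ 2) μ := by
    refine Integrable.mono' ((integrable_condExp (f := fun ω' => A ω' * A ω') (m := G) (μ := μ)).const_mul 1)
      (((stronglyMeasurable_condExp.mono hG).aestronglyMeasurable).pow 2) ?_
    filter_upwards [hcs1] with ω hω
    rw [Real.norm_eq_abs, abs_of_nonneg (sq_nonneg _)]
    calc Ab ω ^ 2 = ((μ[fun ω' => A ω' * 1|G]) ω) ^ 2 := by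
          rw [show (fun ω' => A ω' * 1) = A by funext; ring]
      _ ≤ 1 * (μ[fun ω' => A ω' * A ω'|G]) ω := hω
  have hAb2 : MemLp Ab 2 μ :=
    (memLp_two_iff_integrable_sq
      (stronglyMeasurable_condExp.mono hG).aestronglyMeasurable).2 hAbsq
  -- Zbar coordinates are in L²
  have hZbkm : ∀ k, StronglyMeasurable[G] (fun ω => Zbar ω k) := fun k => by
    rw [hZbar k]
    exact ((stronglyMeasurable_condExp.measurable).const_mul (1/h)).stronglyMeasurable
  have hZbm : StronglyMeasurable[G] Zbar := by
    refine ((WithLp.measurable_toLp 2 _).comp (measurable_pi_iff.2 fun k => (hZbkm k).measurable)).stronglyMeasurable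
  have hZbk2 : ∀ k, MemLp (fun ω => Zbar ω k) 2 μ := by
    intro k
    have hdiag : μ[fun ω => Δ ω k * Δ ω k|G] =ᵐ[μ] fun _ => h := by
      have := hΔ2 k k
      simpa using this
    have hcs := dbdp_condCS hG hsf hA (hΔk2 k) (c := h) hdiag
    have hsq : Integrable (fun ω => (Zbar ω k) ^ 2) μ := by
      refine Integrable.mono'
        ((integrable_condExp (f := fun ω' => A ω' * A ω') (m := G) (μ := μ)).const_mul (1/h)) ?_ ?_
      · exact (((hZbkm k).mono hG).aestronglyMeasurable).pow 2
      · filter_upwards [hcs] with ω hω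
        rw [Real.norm_eq_abs, abs_of_nonneg (sq_nonneg _)]
        have h1 : Zbar ω k = (1/h) * (μ[fun ω' => A ω' * Δ ω' k|G]) ω := congrFun (hZbar k) ω
        rw [h1]
        rw [mul_pow]
        calc (1/h)^2 * ((μ[fun ω' => A ω' * Δ ω' k|G]) ω)^2
            ≤ (1/h)^2 * (h * (μ[fun ω' => A ω' * A ω'|G]) ω) := by
              exact mul_le_mul_of_nonneg_left hω (sq_nonneg _)
          _ = 1/h * (μ[fun ω' => A ω' * A ω'|G]) ω := by
              field_simp
    exact (memLp_two_iff_integrable_sq ((hZbkm k).mono hG).aestronglyMeasurable).2 hsq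
  have hZbar2 : MemLp Zbar 2 μ := by
    refine (memLp_two_iff_integrable_sq_norm ((hZbm.mono hG).aestronglyMeasurable)).2 ?_
    refine (integrable_finset_sum Finset.univ
      (fun k _ => (hZbk2 k).integrable_sq)).congr (.of_forall fun ω => ?_)
    show (∑ k, (Zbar ω k)^2) = ‖Zbar ω‖^2
    rw [hnormsq]
  -- the nonlinear terms
  set fU : Ω → ℝ := fun ω => f (X ω) (U ω) (Z ω) with hfU
  set fV : Ω → ℝ := fun ω => f (X ω) (V ω) (Zbar ω) with hfV
  have hfUmG : StronglyMeasurable[G] fU :=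
    (hfm.comp ((hX.measurable).prodMk ((hUm.measurable).prodMk hZm.measurable))).stronglyMeasurable
  have hfVmG : StronglyMeasurable[G] fV :=
    (hfm.comp ((hX.measurable).prodMk ((hVm.measurable).prodMk hZbm.measurable))).stronglyMeasurable
  have hfU2 : MemLp fU 2 μ := by
    refine MemLp.of_le (E := ℝ)
      (hf0.norm.add ((hU2.norm.add hZ2.norm).const_mul (L : ℝ)))
      ((hfUmG.mono hG).aestronglyMeasurable) (.of_forall fun ω => ?_)
    have hl := (hfL (X ω)).dist_le_mul (U ω, Z ω) (0, 0)
    have hd : dist ((U ω, Z ω) : ℝ × EuclideanSpace ℝ (Fin d)) (0, 0) ≤ ‖U ω‖ + ‖Z ω‖ := by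
      rw [Prod.dist_eq]
      simp only [dist_zero_right]
      exact max_le (le_add_of_nonneg_right (norm_nonneg _))
        (le_add_of_nonneg_left (norm_nonneg _))
    have : ‖fU ω‖ ≤ ‖f (X ω) 0 0‖ + (L : ℝ) * (‖U ω‖ + ‖Z ω‖) := by
      have h2 : dist (fU ω) (f (X ω) 0 0) ≤ (L : ℝ) * (‖U ω‖ + ‖Z ω‖) :=
        hl.trans (mul_le_mul_of_nonneg_left hd (NNReal.coe_nonneg L))
      calc ‖fU ω‖ ≤ ‖f (X ω) 0 0‖ + dist (fU ω) (f (X ω) 0 0) := by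
            rw [dist_eq_norm]
            have := norm_sub_norm_le (fU ω) (f (X ω) 0 0)
            linarith [this]
        _ ≤ _ := by linarith
    refine this.trans (le_abs_self _)
  have hfVeq : fV =ᵐ[μ] fun ω => (1/h) * (V ω - Ab ω) := by
    filter_upwards [hV] with ω hω
    rw [hω]
    field_simp
    simp only [hfV]
    ring
  have hfV2 : MemLp fV 2 μ := ((hV2.sub hAb2).const_mul (1/h)).ae_eq hfVeq.symm
  -- main auxiliary functions
  set W : Ω → ℝ := fun ω => V ω - U ω + (fU ω - fV ω) * h with hW
  set N : Ω → ℝ := fun ω => A ω - Ab ω with hN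
  set S : Ω → ℝ := fun ω => ∑ k, Z ω k * Δ ω k with hS
  have hWmG : StronglyMeasurable[G] W :=
    (hVm.sub hUm).add ((hfUmG.sub hfVmG).mul_const h)
  have hW2 : MemLp W 2 μ := by
    have h1 : MemLp (fun ω => (fU ω - fV ω) * h) 2 μ := by
      refine ((hfU2.sub hfV2).const_mul h).ae_eq (.of_forall fun ω => ?_)
      simp only [Pi.sub_apply]
      ring
    exact (hV2.sub hU2).add h1
  have hN2 : MemLp N 2 μ := hA.sub hAb2
  -- products of coordinates with Δ are in L²
  have hdiag : ∀ k : Fin d, μ[fun ω => Δ ω k * Δ ω k|G] =ᵐ[μ] fun _ => h := fun k => by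
    have := hΔ2 k k; simpa using this
  have key_int : ∀ k, MemLp (fun ω => Z ω k * Δ ω k) 2 μ := by
    intro k
    have hsq : Integrable (fun ω => (Z ω k * Z ω k) * (Δ ω k * Δ ω k)) μ := by
      refine dbdp_int_mul hG hsf ((hZkm k).mul (hZkm k))
        (dbdp_mul2 (hZk2 k) (hZk2 k)) (fun ω => mul_self_nonneg _)
        (dbdp_mul2 (hΔk2 k) (hΔk2 k)) (fun ω => mul_self_nonneg _) hh.le ?_
      exact (hdiag k).le
    refine (memLp_two_iff_integrable_sq (f := fun ω => Z ω k * Δ ω k) ?_).2 ?_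
    · exact (((hZkm k).mono hG).aestronglyMeasurable).mul (hΔk2 k).1
    · exact hsq.congr (.of_forall fun ω => by ring)
  have hS2 : MemLp S 2 μ :=
    (memLp_finset_sum' Finset.univ (fun k _ => key_int k)).ae_eq
      (.of_forall fun ω => by simp [hS])
  -- basic integrability
  have hNint : Integrable N μ := hN2.integrable one_le_two
  have iWN : Integrable (fun ω => W ω * N ω) μ := dbdp_mul2 hW2 hN2
  -- E[W·N] = 0
  have hcond : μ[N|G] =ᵐ[μ] 0 := by
    have h1 : μ[N|G] =ᵐ[μ] μ[A|G] - μ[Ab|G] := condExp_sub hAint integrable_condExp G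
    rw [condExp_of_stronglyMeasurable hG stronglyMeasurable_condExp integrable_condExp] at h1
    refine h1.trans (.of_forall fun ω => ?_)
    simp [hAb]
  have IWN : ∫ ω, W ω * N ω ∂μ = 0 := by
    have hp : ∫ ω, W ω * N ω ∂μ = ∫ ω, W ω * (μ[N|G]) ω ∂μ :=
      dbdp_pullout hG hsf hWmG iWN hNint
    rw [hp]
    have h2 : ∫ ω, W ω * (μ[N|G]) ω ∂μ = ∫ _ω, (0:ℝ) ∂μ := by
      refine integral_congr_ae ?_
      filter_upwards [hcond] with ω hω
      rw [hω]
      simp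
    rw [h2, integral_zero]
  -- E[W·S] = 0
  have IWSk : ∀ k, ∫ ω, (W ω * Z ω k) * Δ ω k ∂μ = 0 := by
    intro k
    have hint : Integrable (fun ω => (W ω * Z ω k) * Δ ω k) μ :=
      (dbdp_mul2 hW2 (key_int k)).congr (.of_forall fun ω => by ring)
    have hp : ∫ ω, (W ω * Z ω k) * Δ ω k ∂μ
        = ∫ ω, (W ω * Z ω k) * (μ[fun ω' => Δ ω' k|G]) ω ∂μ :=
      dbdp_pullout hG hsf (hWmG.mul (hZkm k)) hint ((hΔk2 k).integrable one_le_two)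
    rw [hp]
    have h2 : ∫ ω, (W ω * Z ω k) * (μ[fun ω' => Δ ω' k|G]) ω ∂μ = ∫ _ω, (0:ℝ) ∂μ := by
      refine integral_congr_ae ?_
      filter_upwards [hΔ0 k] with ω hω
      rw [hω]
      simp
    rw [h2, integral_zero]
  have IWS : ∫ ω, W ω * S ω ∂μ = 0 := by
    have e1 : ∫ ω, W ω * S ω ∂μ = ∑ k, ∫ ω, (W ω * Z ω k) * Δ ω k ∂μ := by
      rw [← integral_finset_sum _ (fun k _ =>
        ((dbdp_mul2 hW2 (key_int k)).congr (.of_forall fun ω => by ring) :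
          Integrable (fun ω => (W ω * Z ω k) * Δ ω k) μ))]
      refine integral_congr_ae (.of_forall fun ω => ?_)
      show W ω * (∑ k, Z ω k * Δ ω k) = _
      rw [Finset.mul_sum]
      exact Finset.sum_congr rfl fun k _ => by ring
    rw [e1]
    exact Finset.sum_eq_zero fun k _ => IWSk k
  -- E[Ab·S] terms vanish
  have IAbSk : ∀ k, ∫ ω, (Ab ω * Z ω k) * Δ ω k ∂μ = 0 := by
    intro k
    have hint : Integrable (fun ω => (Ab ω * Z ω k) * Δ ω k) μ :=
      (dbdp_mul2 hAb2 (key_int k)).congr (.of_forall fun ω => by ring)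
    have hp : ∫ ω, (Ab ω * Z ω k) * Δ ω k ∂μ
        = ∫ ω, (Ab ω * Z ω k) * (μ[fun ω' => Δ ω' k|G]) ω ∂μ :=
      dbdp_pullout hG hsf (stronglyMeasurable_condExp.mul (hZkm k)) hint
        ((hΔk2 k).integrable one_le_two)
    rw [hp]
    have h2 : ∫ ω, (Ab ω * Z ω k) * (μ[fun ω' => Δ ω' k|G]) ω ∂μ = ∫ _ω, (0:ℝ) ∂μ := by
      refine integral_congr_ae ?_
      filter_upwards [hΔ0 k] with ω hω
      rw [hω]
      simp
    rw [h2, integral_zero]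
  -- E[A·Z_k·Δ_k] = h E[Z_k·Zbar_k]
  have IASk : ∀ k, ∫ ω, (A ω * Z ω k) * Δ ω k ∂μ = h * ∫ ω, Z ω k * Zbar ω k ∂μ := by
    intro k
    have hint : Integrable (fun ω => Z ω k * (A ω * Δ ω k)) μ :=
      (dbdp_mul2 hA (key_int k)).congr (.of_forall fun ω => by ring)
    have e0 : ∫ ω, (A ω * Z ω k) * Δ ω k ∂μ = ∫ ω, Z ω k * (A ω * Δ ω k) ∂μ :=
      integral_congr_ae (.of_forall fun ω => by ring)
    have hp : ∫ ω, Z ω k * (A ω * Δ ω k) ∂μ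
        = ∫ ω, Z ω k * (μ[fun ω' => A ω' * Δ ω' k|G]) ω ∂μ :=
      dbdp_pullout hG hsf (hZkm k) hint (dbdp_mul2 hA (hΔk2 k))
    have e2 : ∫ ω, Z ω k * (μ[fun ω' => A ω' * Δ ω' k|G]) ω ∂μ
        = ∫ ω, h * (Z ω k * Zbar ω k) ∂μ := by
      refine integral_congr_ae (.of_forall fun ω => ?_)
      show Z ω k * (μ[fun ω' => A ω' * Δ ω' k|G]) ω = h * (Z ω k * Zbar ω k)
      have h1 : Zbar ω k = (1/h) * (μ[fun ω' => A ω' * Δ ω' k|G]) ω := congrFun (hZbar k) ω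
      have h2 : (μ[fun ω' => A ω' * Δ ω' k|G]) ω = h * Zbar ω k := by
        rw [h1]
        field_simp
      rw [h2]
      ring
    rw [e0, hp, e2, integral_const_mul]
  -- E[S·S] = h ∑ E[Z_k²]
  have ISSkl : ∀ k l, ∫ ω, (Z ω k * Z ω l) * (Δ ω k * Δ ω l) ∂μ
      = if k = l then h * ∫ ω, Z ω k * Z ω k ∂μ else 0 := by
    intro k l
    have hint : Integrable (fun ω => (Z ω k * Z ω l) * (Δ ω k * Δ ω l)) μ :=
      (dbdp_mul2 (key_int k) (key_int l)).congr (.of_forall fun ω => by ring)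
    have hp : ∫ ω, (Z ω k * Z ω l) * (Δ ω k * Δ ω l) ∂μ
        = ∫ ω, (Z ω k * Z ω l) * (μ[fun ω' => Δ ω' k * Δ ω' l|G]) ω ∂μ :=
      dbdp_pullout hG hsf ((hZkm k).mul (hZkm l)) hint (dbdp_mul2 (hΔk2 k) (hΔk2 l))
    rw [hp]
    have e2 : ∫ ω, (Z ω k * Z ω l) * (μ[fun ω' => Δ ω' k * Δ ω' l|G]) ω ∂μ
        = ∫ ω, (Z ω k * Z ω l) * (if k = l then h else 0) ∂μ := by
      refine integral_congr_ae ?_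
      filter_upwards [hΔ2 k l] with ω hω
      rw [hω]
    rw [e2]
    by_cases hkl : k = l
    · subst hkl
      rw [integral_congr_ae (.of_forall fun ω =>
        show Z ω k * Z ω k * (if k = k then h else 0) = (Z ω k * Z ω k) * h from by
          rw [if_pos rfl])]
      rw [integral_mul_const, if_pos rfl]
      ring
    · rw [integral_congr_ae (.of_forall fun ω =>
        show Z ω k * Z ω l * (if k = l then h else 0) = 0 from by
          rw [if_neg hkl]; ring)]
      rw [if_neg hkl, integral_zero]
  have hterm : ∀ k l, Integrable (fun ω => (Z ω k * Z ω l) * (Δ ω k * Δ ω l)) μ := fun k l =>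
    (dbdp_mul2 (key_int k) (key_int l)).congr (.of_forall fun ω => by ring)
  have ISS : ∫ ω, S ω * S ω ∂μ = h * ∑ k, ∫ ω, Z ω k * Z ω k ∂μ := by
    have e1 : ∫ ω, S ω * S ω ∂μ
        = ∑ k, ∫ ω, ∑ l, (Z ω k * Z ω l) * (Δ ω k * Δ ω l) ∂μ := by
      rw [← integral_finset_sum _ (fun k _ => integrable_finset_sum _ (fun l _ => hterm k l))]
      refine integral_congr_ae (.of_forall fun ω => ?_)
      show (∑ k, Z ω k * Δ ω k) * (∑ l, Z ω l * Δ ω l) = _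
      rw [Finset.sum_mul_sum]
      exact Finset.sum_congr rfl fun k _ => Finset.sum_congr rfl fun l _ => by ring
    have e3 : ∀ k, ∫ ω, ∑ l, (Z ω k * Z ω l) * (Δ ω k * Δ ω l) ∂μ
        = h * ∫ ω, Z ω k * Z ω k ∂μ := by
      intro k
      rw [integral_finset_sum _ (fun l _ => hterm k l)]
      rw [show (∑ l, ∫ ω, (Z ω k * Z ω l) * (Δ ω k * Δ ω l) ∂μ)
          = ∑ l, if k = l then h * ∫ ω, Z ω k * Z ω k ∂μ else 0 from
        Finset.sum_congr rfl fun l _ => ISSkl k l]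
      rw [Finset.sum_ite_eq]
      simp
    rw [e1,
      show (∑ k, ∫ ω, ∑ l, (Z ω k * Z ω l) * (Δ ω k * Δ ω l) ∂μ)
        = ∑ k, h * ∫ ω, Z ω k * Z ω k ∂μ from Finset.sum_congr rfl fun k _ => e3 k,
      Finset.mul_sum]
  -- E[N·S] = h ∑ E[Z_k Zbar_k]
  have INS : ∫ ω, N ω * S ω ∂μ = h * ∑ k, ∫ ω, Z ω k * Zbar ω k ∂μ := by
    have iAS : Integrable (fun ω => ∑ k, (A ω * Z ω k) * Δ ω k) μ :=
      integrable_finset_sum _ (fun k _ =>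
        (dbdp_mul2 hA (key_int k)).congr (.of_forall fun ω => by ring))
    have iAbS : Integrable (fun ω => ∑ k, (Ab ω * Z ω k) * Δ ω k) μ :=
      integrable_finset_sum _ (fun k _ =>
        (dbdp_mul2 hAb2 (key_int k)).congr (.of_forall fun ω => by ring))
    have e1 : ∫ ω, N ω * S ω ∂μ
        = ∫ ω, (∑ k, (A ω * Z ω k) * Δ ω k) - (∑ k, (Ab ω * Z ω k) * Δ ω k) ∂μ := by
      refine integral_congr_ae (.of_forall fun ω => ?_)
      show (A ω - Ab ω) * (∑ k, Z ω k * Δ ω k) = _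
      rw [sub_mul, Finset.mul_sum, Finset.mul_sum]
      congr 1
      · exact Finset.sum_congr rfl fun k _ => by ring
      · exact Finset.sum_congr rfl fun k _ => by ring
    rw [e1, integral_sub iAS iAbS,
      integral_finset_sum _ (fun k _ =>
        ((dbdp_mul2 hA (key_int k)).congr (.of_forall fun ω => by ring) :
          Integrable (fun ω => (A ω * Z ω k) * Δ ω k) μ)),
      integral_finset_sum _ (fun k _ =>
        ((dbdp_mul2 hAb2 (key_int k)).congr (.of_forall fun ω => by ring) :
          Integrable (fun ω => (Ab ω * Z ω k) * Δ ω k) μ))]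
    rw [show (∑ k, ∫ ω, (A ω * Z ω k) * Δ ω k ∂μ)
        = ∑ k, h * ∫ ω, Z ω k * Zbar ω k ∂μ from Finset.sum_congr rfl fun k _ => IASk k,
      show (∑ k, ∫ ω, (Ab ω * Z ω k) * Δ ω k ∂μ) = 0 from
        Finset.sum_eq_zero fun k _ => IAbSk k]
    rw [Finset.mul_sum]
    ring
  -- pointwise inner product
  have hinner : ∀ ω, (inner ℝ (Z ω) (Δ ω) : ℝ) = ∑ k, Z ω k * Δ ω k := fun ω => by
    simp [PiLp.inner_apply, RCLike.inner_apply, conj_trivial]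
    exact Finset.sum_congr rfl fun k _ => mul_comm _ _
  -- rewrite of the left-hand side integrand
  have step1 : ∫ ω, (A ω - U ω + f (X ω) (U ω) (Z ω) * h - (inner ℝ (Z ω) (Δ ω) : ℝ)) ^ 2 ∂μ
      = ∫ ω, (W ω + N ω - S ω)^2 ∂μ := by
    refine integral_congr_ae ?_
    filter_upwards [hV] with ω hVω
    rw [hinner ω]
    rw [show A ω - U ω + f (X ω) (U ω) (Z ω) * h - (∑ k, Z ω k * Δ ω k)
        = W ω + N ω - S ω from by
      have h1 : W ω = V ω - U ω + (fU ω - fV ω) * h := rfl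
      have h2 : N ω = A ω - Ab ω := rfl
      have h3 : S ω = ∑ k, Z ω k * Δ ω k := rfl
      rw [h1, h2, h3]
      have h4 : fU ω = f (X ω) (U ω) (Z ω) := rfl
      have h5 : fV ω = f (X ω) (V ω) (Zbar ω) := rfl
      rw [h4, h5]
      have h6 : V ω = Ab ω + h * f (X ω) (V ω) (Zbar ω) := hVω
      linear_combination -h6]
  -- expansion of the square
  have iWW : Integrable (fun ω => W ω * W ω) μ := dbdp_mul2 hW2 hW2
  have iNN : Integrable (fun ω => N ω * N ω) μ := dbdp_mul2 hN2 hN2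
  have iSS2 : Integrable (fun ω => S ω * S ω) μ := dbdp_mul2 hS2 hS2
  have iWS : Integrable (fun ω => W ω * S ω) μ := dbdp_mul2 hW2 hS2
  have iNS : Integrable (fun ω => N ω * S ω) μ := dbdp_mul2 hN2 hS2
  have ih1 : Integrable (fun ω => W ω * W ω + N ω * N ω + S ω * S ω + 2*(W ω * N ω)) μ := by
    refine (((iWW.add iNN).add iSS2).add (iWN.const_mul 2)).congr (.of_forall fun ω => ?_)
    simp only [Pi.add_apply]
  have ih2 : Integrable (fun ω => 2*(W ω * S ω) + 2*(N ω * S ω)) μ := by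
    refine ((iWS.const_mul 2).add (iNS.const_mul 2)).congr (.of_forall fun ω => ?_)
    simp only [Pi.add_apply]
  have expand : ∫ ω, (W ω + N ω - S ω)^2 ∂μ
      = ∫ ω, W ω * W ω ∂μ + ∫ ω, N ω * N ω ∂μ + ∫ ω, S ω * S ω ∂μ
        + 2 * ∫ ω, W ω * N ω ∂μ - (2 * ∫ ω, W ω * S ω ∂μ + 2 * ∫ ω, N ω * S ω ∂μ) := by
    rw [show (fun ω => (W ω + N ω - S ω)^2)
        = fun ω => (W ω * W ω + N ω * N ω + S ω * S ω + 2*(W ω * N ω))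
          - (2*(W ω * S ω) + 2*(N ω * S ω)) from funext fun ω => by ring]
    have ia1 : Integrable (fun ω => W ω * W ω + N ω * N ω) μ := by
      refine (iWW.add iNN).congr (.of_forall fun ω => ?_)
      simp only [Pi.add_apply]
    have ia2 : Integrable (fun ω => W ω * W ω + N ω * N ω + S ω * S ω) μ := by
      refine (ia1.add iSS2).congr (.of_forall fun ω => ?_)
      simp only [Pi.add_apply]
    rw [integral_sub ih1 ih2]
    rw [integral_add ia2 (iWN.const_mul 2),
      integral_add ia1 iSS2, integral_add iWW iNN,
      integral_add (iWS.const_mul 2) (iNS.const_mul 2),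
      integral_const_mul, integral_const_mul, integral_const_mul]
  -- identify RHS integrals
  have G1 : ∫ ω, (V ω - U ω + (f (X ω) (U ω) (Z ω) - f (X ω) (V ω) (Zbar ω)) * h) ^ 2 ∂μ
      = ∫ ω, W ω * W ω ∂μ := by
    refine integral_congr_ae (.of_forall fun ω => ?_)
    show (V ω - U ω + (f (X ω) (U ω) (Z ω) - f (X ω) (V ω) (Zbar ω)) * h) ^ 2 = W ω * W ω
    rw [sq]
  have G2 : ∫ ω, (A ω - Ab ω) ^ 2 ∂μ = ∫ ω, N ω * N ω ∂μ := by
    refine integral_congr_ae (.of_forall fun ω => ?_)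
    show (A ω - Ab ω) ^ 2 = N ω * N ω
    rw [sq]
  have iZZb : ∀ k, Integrable (fun ω => Z ω k * Zbar ω k) μ := fun k =>
    dbdp_mul2 (hZk2 k) (hZbk2 k)
  have iZZ : ∀ k, Integrable (fun ω => Z ω k * Z ω k) μ := fun k =>
    dbdp_mul2 (hZk2 k) (hZk2 k)
  have iZbZb : ∀ k, Integrable (fun ω => Zbar ω k * Zbar ω k) μ := fun k =>
    dbdp_mul2 (hZbk2 k) (hZbk2 k)
  have E3 : ∫ ω, ‖Zbar ω‖ ^ 2 ∂μ = ∑ k, ∫ ω, Zbar ω k * Zbar ω k ∂μ := by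
    rw [integral_congr_ae (.of_forall fun ω =>
      show ‖Zbar ω‖ ^ 2 = ∑ k, Zbar ω k * Zbar ω k from by
        rw [hnormsq]
        exact Finset.sum_congr rfl fun k _ => sq (Zbar ω k))]
    exact integral_finset_sum _ fun k _ => iZbZb k
  have E2 : ∫ ω, ‖Z ω - Zbar ω‖ ^ 2 ∂μ
      = ∑ k, ∫ ω, Z ω k * Z ω k ∂μ - 2 * ∑ k, ∫ ω, Z ω k * Zbar ω k ∂μ
        + ∑ k, ∫ ω, Zbar ω k * Zbar ω k ∂μ := by
    have e1 : ∫ ω, ‖Z ω - Zbar ω‖ ^ 2 ∂μ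
        = ∑ k, ∫ ω, (Z ω k * Z ω k - 2 * (Z ω k * Zbar ω k)) + Zbar ω k * Zbar ω k ∂μ := by
      rw [integral_congr_ae (.of_forall fun ω =>
        show ‖Z ω - Zbar ω‖ ^ 2
          = ∑ k, ((Z ω k * Z ω k - 2 * (Z ω k * Zbar ω k)) + Zbar ω k * Zbar ω k) from by
          rw [hnormsq]
          refine Finset.sum_congr rfl fun k _ => ?_
          have : (Z ω - Zbar ω) k = Z ω k - Zbar ω k := by simp
          rw [this]
          ring)]
      exact integral_finset_sum _ fun k _ => ((iZZ k).sub ((iZZb k).const_mul 2)).add (iZbZb k)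
    rw [e1]
    have e2 : ∀ k : Fin d, ∫ ω, (Z ω k * Z ω k - 2 * (Z ω k * Zbar ω k)) + Zbar ω k * Zbar ω k ∂μ
        = (∫ ω, Z ω k * Z ω k ∂μ - 2 * ∫ ω, Z ω k * Zbar ω k ∂μ) + ∫ ω, Zbar ω k * Zbar ω k ∂μ := by
      intro k
      have ia3 : Integrable (fun ω => Z ω k * Z ω k - 2 * (Z ω k * Zbar ω k)) μ := by
        refine ((iZZ k).sub ((iZZb k).const_mul 2)).congr (.of_forall fun ω => ?_)
        simp only [Pi.sub_apply]
      rw [integral_add ia3 (iZbZb k),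
        integral_sub (iZZ k) ((iZZb k).const_mul 2), integral_const_mul]
    rw [Finset.sum_congr rfl fun k _ => e2 k]
    rw [Finset.sum_add_distrib, Finset.sum_sub_distrib, ← Finset.mul_sum]
  -- conclusion
  rw [step1, expand, IWN, IWS, ISS, INS, G1, G2, E2, E3]
  ring
end

section
/- Let (Ω, F, P) be a probability space, G ⊆ F a sub-σ-algebra, X a G-measurable ℝ^q-valued random variable, and f : ℝ^q × ℝ × ℝ^d → ℝ measurable, Lipschitz in (y, z) with constant L uniformly in x. Let V ∈ L²(ℝ) and Z̄ ∈ L²(ℝ^d) be G-measurable, with f(X, V, Z̄) ∈ L². Then there exists a constant C > 0 depending only on L such that for every h ∈ (0, 1] and all G-measurable U ∈ L²(ℝ), Z ∈ L²(ℝ^d): E[ |V − U + ( f(X, U, Z) − f(X, V, Z̄) ) h|² ] + h E[ |Z − Z̄|² ] ≥ (1 − C h) E[ |V − U|² ] + (h/2) E[ |Z̄ − Z|² ]. -/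
open MeasureTheory
open scoped NNReal

private lemma dbdp_pointwise (l h a b z : ℝ) (hh : 0 < h) (hz : 0 ≤ z)
    (hb : |b| ≤ l * h * (|a| + z)) :
    (1 - (2*l + 2*l^2 + 1) * h) * a ^ 2 + (h/2) * z ^ 2 ≤ (a + b) ^ 2 + h * z ^ 2 := by
  have hab : -(l * h * (a^2 + |a| * z)) ≤ a * b := by
    have e : l * h * (a^2 + |a| * z) = |a| * (l * h * (|a| + z)) := by
      rw [← sq_abs a]; ring
    rw [e]
    calc -(|a| * (l * h * (|a| + z))) ≤ -(|a| * |b|) := by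
            nlinarith [abs_nonneg a]
      _ ≤ a * b := by rw [← abs_mul]; exact neg_abs_le _
  have hsq : 0 ≤ h * (4*l^2*a^2 - 4*l*(|a| * z) + z^2) := by
    have e : 4*l^2*a^2 - 4*l*(|a| * z) + z^2 = (2*l*|a| - z)^2 := by
      rw [← sq_abs a]; ring
    rw [e]; positivity
  nlinarith [sq_nonneg b, mul_nonneg hh.le (sq_nonneg a)]

/-- Lower bound on the reduced loss of the DBDP1 scheme: there is a constant `C > 0`
depending only on `L` such that for every `h ∈ (0, 1]` and all `G`-measurable `U ∈ L²`,
`Z ∈ L²`,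
`E[|V - U + (f(X,U,Z) - f(X,V,Z̄)) h|²] + h E[|Z - Z̄|²]
  ≥ (1 - C h) E[|V - U|²] + (h/2) E[|Z̄ - Z|²]`. -/
theorem stmt9 (d q : ℕ) (L : ℝ≥0) :
    ∃ C : ℝ, 0 < C ∧
      ∀ (Ω : Type) (m0 : MeasurableSpace Ω) (μ : Measure Ω), IsProbabilityMeasure μ →
      ∀ G : MeasurableSpace Ω, G ≤ m0 →
      ∀ X : Ω → EuclideanSpace ℝ (Fin q), StronglyMeasurable[G] X →
      ∀ f : EuclideanSpace ℝ (Fin q) → ℝ → EuclideanSpace ℝ (Fin d) → ℝ,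
        Measurable (fun p : EuclideanSpace ℝ (Fin q) × ℝ × EuclideanSpace ℝ (Fin d) =>
          f p.1 p.2.1 p.2.2) →
        (∀ x, LipschitzWith L (fun p : ℝ × EuclideanSpace ℝ (Fin d) => f x p.1 p.2)) →
      ∀ V : Ω → ℝ, StronglyMeasurable[G] V → MemLp V 2 μ →
      ∀ Zbar : Ω → EuclideanSpace ℝ (Fin d), StronglyMeasurable[G] Zbar → MemLp Zbar 2 μ →
      MemLp (fun ω => f (X ω) (V ω) (Zbar ω)) 2 μ →
      ∀ h : ℝ, 0 < h → h ≤ 1 →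
      ∀ U : Ω → ℝ, StronglyMeasurable[G] U → MemLp U 2 μ →
      ∀ Z : Ω → EuclideanSpace ℝ (Fin d), StronglyMeasurable[G] Z → MemLp Z 2 μ →
      (1 - C * h) * ∫ ω, (V ω - U ω) ^ 2 ∂μ
          + (h / 2) * ∫ ω, ‖Zbar ω - Z ω‖ ^ 2 ∂μ ≤
        (∫ ω, (V ω - U ω + (f (X ω) (U ω) (Z ω) - f (X ω) (V ω) (Zbar ω)) * h) ^ 2 ∂μ)
          + h * ∫ ω, ‖Z ω - Zbar ω‖ ^ 2 ∂μ := by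
  set l : ℝ := (L : ℝ) with hl
  have hl0 : 0 ≤ l := L.coe_nonneg
  refine ⟨2*l + 2*l^2 + 1, by positivity, ?_⟩
  intro Ω m0 μ hμ G hG X hX f hfm hfL V hV hV2 Zbar hZbar hZbar2 hfV2 h hh hh1
    U hU hU2 Z hZ hZ2
  -- measurability (w.r.t. m0)
  have mX : Measurable[m0] X := hX.measurable.mono hG le_rfl
  have mU : Measurable[m0] U := hU.measurable.mono hG le_rfl
  have mV : Measurable[m0] V := hV.measurable.mono hG le_rfl
  have mZ : Measurable[m0] Z := hZ.measurable.mono hG le_rfl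
  have mZbar : Measurable[m0] Zbar := hZbar.measurable.mono hG le_rfl
  have mfUZ : Measurable[m0] (fun ω => f (X ω) (U ω) (Z ω)) :=
    hfm.comp (mX.prodMk (mU.prodMk mZ))
  have mfVZ : Measurable[m0] (fun ω => f (X ω) (V ω) (Zbar ω)) :=
    hfm.comp (mX.prodMk (mV.prodMk mZbar))
  -- pointwise Lipschitz bound on the driver increment
  have hΔbound : ∀ ω, |f (X ω) (U ω) (Z ω) - f (X ω) (V ω) (Zbar ω)|
      ≤ l * (|V ω - U ω| + ‖Z ω - Zbar ω‖) := by
    intro ω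
    have := (hfL (X ω)).dist_le_mul (U ω, Z ω) (V ω, Zbar ω)
    rw [Prod.dist_eq] at this
    have hd : dist (f (X ω) (U ω) (Z ω)) (f (X ω) (V ω) (Zbar ω))
        = |f (X ω) (U ω) (Z ω) - f (X ω) (V ω) (Zbar ω)| := Real.dist_eq _ _
    have hmax : max (dist (U ω) (V ω)) (dist (Z ω) (Zbar ω))
        ≤ |V ω - U ω| + ‖Z ω - Zbar ω‖ := by
      rw [Real.dist_eq, dist_eq_norm, abs_sub_comm]
      exact max_le (le_add_of_nonneg_right (norm_nonneg _))
        (le_add_of_nonneg_left (abs_nonneg _))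
    calc |f (X ω) (U ω) (Z ω) - f (X ω) (V ω) (Zbar ω)|
        ≤ l * max (dist (U ω) (V ω)) (dist (Z ω) (Zbar ω)) := by rw [← hd]; exact this
      _ ≤ l * (|V ω - U ω| + ‖Z ω - Zbar ω‖) := by
          exact mul_le_mul_of_nonneg_left hmax hl0
  -- L² facts
  have hVU : MemLp (fun ω => V ω - U ω) 2 μ := hV2.sub hU2
  have hZZ : MemLp (fun ω => Z ω - Zbar ω) 2 μ := hZ2.sub hZbar2
  have hZZ' : MemLp (fun ω => Zbar ω - Z ω) 2 μ := hZbar2.sub hZ2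
  have hg : MemLp (fun ω => |V ω - U ω| + ‖Z ω - Zbar ω‖) 2 μ := by
    have h1 : MemLp (fun ω => |V ω - U ω|) 2 μ := by
      simpa [Real.norm_eq_abs] using hVU.norm
    exact h1.add hZZ.norm
  have hΔ : MemLp (fun ω => f (X ω) (U ω) (Z ω) - f (X ω) (V ω) (Zbar ω)) 2 μ := by
    refine MemLp.of_le_mul (c := l) hg
      ((mfUZ.sub mfVZ).aestronglyMeasurable) ?_
    filter_upwards with ω
    have := hΔbound ω
    rw [Real.norm_eq_abs, Real.norm_eq_abs]
    rwa [abs_of_nonneg (by positivity : (0:ℝ) ≤ |V ω - U ω| + ‖Z ω - Zbar ω‖)]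
  have hb2 : MemLp (fun ω => (f (X ω) (U ω) (Z ω) - f (X ω) (V ω) (Zbar ω)) * h) 2 μ := by
    simpa [mul_comm] using hΔ.const_mul h
  have hsum : MemLp (fun ω => V ω - U ω
      + (f (X ω) (U ω) (Z ω) - f (X ω) (V ω) (Zbar ω)) * h) 2 μ := hVU.add hb2
  -- integrability of all squared terms
  have iVU : Integrable (fun ω => (V ω - U ω) ^ 2) μ := hVU.integrable_sq
  have iZZ : Integrable (fun ω => ‖Z ω - Zbar ω‖ ^ 2) μ := hZZ.norm.integrable_sq
  have iZZ' : Integrable (fun ω => ‖Zbar ω - Z ω‖ ^ 2) μ := hZZ'.norm.integrable_sq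
  have iSum : Integrable (fun ω => (V ω - U ω
      + (f (X ω) (U ω) (Z ω) - f (X ω) (V ω) (Zbar ω)) * h) ^ 2) μ := hsum.integrable_sq
  -- rewrite both sides as single integrals
  have hLHS : (1 - (2*l + 2*l^2 + 1) * h) * ∫ ω, (V ω - U ω) ^ 2 ∂μ
      + (h / 2) * ∫ ω, ‖Zbar ω - Z ω‖ ^ 2 ∂μ
      = ∫ ω, ((1 - (2*l + 2*l^2 + 1) * h) * (V ω - U ω) ^ 2
          + (h / 2) * ‖Zbar ω - Z ω‖ ^ 2) ∂μ := by
    rw [integral_add (iVU.const_mul _) (iZZ'.const_mul _),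
      integral_const_mul, integral_const_mul]
  have hRHS : (∫ ω, (V ω - U ω
        + (f (X ω) (U ω) (Z ω) - f (X ω) (V ω) (Zbar ω)) * h) ^ 2 ∂μ)
      + h * ∫ ω, ‖Z ω - Zbar ω‖ ^ 2 ∂μ
      = ∫ ω, ((V ω - U ω
          + (f (X ω) (U ω) (Z ω) - f (X ω) (V ω) (Zbar ω)) * h) ^ 2
          + h * ‖Z ω - Zbar ω‖ ^ 2) ∂μ := by
    rw [integral_add iSum (iZZ.const_mul _), integral_const_mul]
  rw [hLHS, hRHS]
  refine integral_mono ((iVU.const_mul _).add (iZZ'.const_mul _))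
    (iSum.add (iZZ.const_mul _)) ?_
  intro ω
  have hznn : (0:ℝ) ≤ ‖Zbar ω - Z ω‖ := norm_nonneg _
  have hbb : |(f (X ω) (U ω) (Z ω) - f (X ω) (V ω) (Zbar ω)) * h|
      ≤ l * h * (|V ω - U ω| + ‖Zbar ω - Z ω‖) := by
    rw [abs_mul, abs_of_pos hh, norm_sub_rev (Zbar ω)]
    calc |f (X ω) (U ω) (Z ω) - f (X ω) (V ω) (Zbar ω)| * h
        ≤ (l * (|V ω - U ω| + ‖Z ω - Zbar ω‖)) * h :=
          mul_le_mul_of_nonneg_right (hΔbound ω) hh.le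
      _ = l * h * (|V ω - U ω| + ‖Z ω - Zbar ω‖) := by ring
  have key := dbdp_pointwise l h (V ω - U ω)
    ((f (X ω) (U ω) (Z ω) - f (X ω) (V ω) (Zbar ω)) * h) (‖Zbar ω - Z ω‖) hh hznn hbb
  simpa [norm_sub_rev (Z ω)] using key
end

section
/- Let (Ω, F, P) be a probability space, G ⊆ F a sub-σ-algebra, X a G-measurable ℝ^q-valued random variable, and f : ℝ^q × ℝ → ℝ measurable, Lipschitz in its second argument with constant L uniformly in x, with f(X, 0) ∈ L². Let h > 0 with hL < 1, let A ∈ L²(ℝ), and let V be the G-measurable solution of V = E[A | G] + h f(X, V). Then for every G-measurable U ∈ L²(ℝ): E[ |A − U + h f(X, U)|² ] = E[ |V − U + h ( f(X, U) − f(X, V) )|² ] + E[ |A − E[A | G]|² ], where the second term does not depend on U. -/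
open MeasureTheory
open scoped NNReal

/-- Orthogonal decomposition of the expected quadratic loss of the RDBDPbis scheme
(driver independent of `z`):
`E[|A - U + h f(X,U)|²] = E[|V - U + h (f(X,U) - f(X,V))|²] + E[|A - E[A|G]|²]`,
where the last term does not depend on `U`. -/
theorem stmt15 {Ω : Type*} [m0 : MeasurableSpace Ω] (μ : Measure Ω) [IsProbabilityMeasure μ]
    (G : MeasurableSpace Ω) (hG : G ≤ m0)
    (q : ℕ) (X : Ω → EuclideanSpace ℝ (Fin q)) (hX : StronglyMeasurable[G] X)
    (f : EuclideanSpace ℝ (Fin q) → ℝ → ℝ) (L : ℝ≥0)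
    (hfm : Measurable (Function.uncurry f))
    (hfL : ∀ x, LipschitzWith L (f x))
    (hf0 : MemLp (fun ω => f (X ω) 0) 2 μ)
    (h : ℝ) (hh : 0 < h) (hhL : h * (L : ℝ) < 1)
    (A : Ω → ℝ) (hA : MemLp A 2 μ)
    (V : Ω → ℝ) (hVm : StronglyMeasurable[G] V) (hV2 : MemLp V 2 μ)
    (hV : V =ᵐ[μ] fun ω => (μ[A|G]) ω + h * f (X ω) (V ω)) :
    ∀ U : Ω → ℝ, StronglyMeasurable[G] U → MemLp U 2 μ →
      ∫ ω, (A ω - U ω + h * f (X ω) (U ω)) ^ 2 ∂μ =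
        (∫ ω, (V ω - U ω + h * (f (X ω) (U ω) - f (X ω) (V ω))) ^ 2 ∂μ)
          + ∫ ω, (A ω - (μ[A|G]) ω) ^ 2 ∂μ := by
  intro U hUm hU2
  -- measurability and L² facts for f ∘ (X, W)
  have hXm : Measurable[G] X := hX.measurable
  have key : ∀ W : Ω → ℝ, StronglyMeasurable[G] W → MemLp W 2 μ →
      StronglyMeasurable[G] (fun ω => f (X ω) (W ω)) ∧
      MemLp (fun ω => f (X ω) (W ω)) 2 μ := by
    intro W hWm hW2
    have hmeas : StronglyMeasurable[G] (fun ω => f (X ω) (W ω)) :=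
      (hfm.comp (hXm.prodMk hWm.measurable)).stronglyMeasurable
    refine ⟨hmeas, ?_⟩
    have hbd : MemLp (fun ω => |f (X ω) 0| + (L : ℝ) * |W ω|) 2 μ :=
      hf0.norm.add ((hW2.norm).const_mul (L : ℝ))
    refine MemLp.of_le hbd ((hmeas.mono hG).aestronglyMeasurable) ?_
    refine Filter.Eventually.of_forall fun ω => ?_
    have h1 : |f (X ω) (W ω) - f (X ω) 0| ≤ (L : ℝ) * |W ω| := by
      simpa [Real.dist_eq, sub_zero] using (hfL (X ω)).dist_le_mul (W ω) 0
    have h2 : |f (X ω) (W ω)| ≤ |f (X ω) 0| + (L : ℝ) * |W ω| := by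
      calc |f (X ω) (W ω)| = |f (X ω) 0 + (f (X ω) (W ω) - f (X ω) 0)| := by
            congr 1; ring
        _ ≤ |f (X ω) 0| + |f (X ω) (W ω) - f (X ω) 0| := abs_add_le _ _
        _ ≤ |f (X ω) 0| + (L : ℝ) * |W ω| := by linarith
    have hnn : 0 ≤ |f (X ω) 0| + (L : ℝ) * |W ω| :=
      add_nonneg (abs_nonneg _) (mul_nonneg (NNReal.coe_nonneg L) (abs_nonneg _))
    simpa [Real.norm_eq_abs, abs_of_nonneg hnn] using h2
  obtain ⟨hfUm, hfU2⟩ := key U hUm hU2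
  obtain ⟨hfVm, hfV2⟩ := key V hVm hV2
  set B : Ω → ℝ := fun ω => V ω - U ω + h * (f (X ω) (U ω) - f (X ω) (V ω)) with hB
  set C : Ω → ℝ := fun ω => A ω - (μ[A|G]) ω with hC
  have hBm : StronglyMeasurable[G] B :=
    (hVm.sub hUm).add (((hfUm.sub hfVm)).const_mul h)
  have hB2 : MemLp B 2 μ := (hV2.sub hU2).add (((hfU2.sub hfV2)).const_mul h)
  have hcond2 : MemLp (μ[A|G]) 2 μ := by
    refine (hV2.sub (hfV2.const_mul h)).ae_eq ?_
    filter_upwards [hV] with ω hω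
    simp only [Pi.sub_apply]
    linarith [hω]
  have hC2 : MemLp C 2 μ := hA.sub hcond2
  -- pointwise decomposition a.e.
  have hdecomp : (fun ω => A ω - U ω + h * f (X ω) (U ω)) =ᵐ[μ] fun ω => B ω + C ω := by
    filter_upwards [hV] with ω hω
    simp only [hB, hC]
    linarith [hω]
  -- integrability of products
  have hBC : Integrable (fun ω => B ω * C ω) μ := by
    have hsm : MemLp (B • C) 1 μ := by
      exact MemLp.smul hC2 hB2
    exact memLp_one_iff_integrable.mp hsm
  -- orthogonality: ∫ B * C = 0
  have hcondC : μ[C|G] =ᵐ[μ] 0 := by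
    have h1 : μ[C|G] =ᵐ[μ] μ[A|G] - μ[μ[A|G]|G] :=
      condExp_sub (hA.integrable one_le_two) integrable_condExp G
    have h2 : μ[μ[A|G]|G] = μ[A|G] :=
      condExp_of_stronglyMeasurable hG stronglyMeasurable_condExp integrable_condExp
    filter_upwards [h1] with ω hω
    simp [hω, h2]
  have horth : ∫ ω, B ω * C ω ∂μ = 0 := by
    have hpull : μ[B * C|G] =ᵐ[μ] B * μ[C|G] :=
      condExp_mul_of_stronglyMeasurable_left hBm hBC
        (hC2.integrable one_le_two)
    have h0 : μ[B * C|G] =ᵐ[μ] 0 := by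
      filter_upwards [hpull, hcondC] with ω h1 h2
      simp [h1, h2]
    have h1 : ∫ ω, B ω * C ω ∂μ = ∫ ω, (B * C) ω ∂μ := rfl
    rw [h1, ← integral_condExp hG, integral_congr_ae h0]
    simp
  -- square integrability
  have hBsq : Integrable (fun ω => B ω ^ 2) μ := by
    simpa [sq] using hB2.integrable_sq
  have hCsq : Integrable (fun ω => C ω ^ 2) μ := by
    simpa [sq] using hC2.integrable_sq
  calc ∫ ω, (A ω - U ω + h * f (X ω) (U ω)) ^ 2 ∂μ
      = ∫ ω, (B ω + C ω) ^ 2 ∂μ := by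
        refine integral_congr_ae ?_
        filter_upwards [hdecomp] with ω hω
        rw [hω]
    _ = ∫ ω, (B ω ^ 2 + (2 * (B ω * C ω) + C ω ^ 2)) ∂μ := by
        congr 1; funext ω; ring
    _ = (∫ ω, B ω ^ 2 ∂μ) + ∫ ω, (2 * (B ω * C ω) + C ω ^ 2) ∂μ :=
        integral_add hBsq ((hBC.const_mul 2).add hCsq)
    _ = (∫ ω, B ω ^ 2 ∂μ) + ((∫ ω, 2 * (B ω * C ω) ∂μ) + ∫ ω, C ω ^ 2 ∂μ) := by
        rw [integral_add (hBC.const_mul 2) hCsq]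
    _ = (∫ ω, B ω ^ 2 ∂μ) + ∫ ω, C ω ^ 2 ∂μ := by
        rw [integral_const_mul, horth]; ring
end

section
/- Let (Ω, F, P) be a probability space, G ⊆ F a sub-σ-algebra, X a G-measurable ℝ^q-valued random variable, and f : ℝ^q × ℝ → ℝ measurable, Lipschitz in its second argument with constant L uniformly in x, with f(X, 0) ∈ L². Let h > 0 with hL < 1, let A ∈ L²(ℝ), and let V be the G-measurable solution of V = E[A | G] + h f(X, V). Let S be a nonempty set of G-measurable elements of L²(ℝ) and suppose U* ∈ S minimizes the loss L̄(U) := E[ |A − U + h f(X, U)|² ] over S. Then ‖V − U*‖_{L²} ≤ ((1 + L h)/(1 − L h)) · inf_{U ∈ S} ‖V − U‖_{L²}. -/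
open MeasureTheory
open scoped NNReal

lemma aux_integrable_mul {Ω : Type*} {_m : MeasurableSpace Ω} {μ : Measure Ω} {f g : Ω → ℝ}
    (hf : MemLp f 2 μ) (hg : MemLp g 2 μ) : Integrable (fun ω => f ω * g ω) μ := by
  have h1 := (hf.add hg).integrable_sq
  have h2 := hf.integrable_sq
  have h3 := hg.integrable_sq
  have key : (fun ω => f ω * g ω) =
      fun ω => (((f ω + g ω) ^ 2 - f ω ^ 2) - g ω ^ 2) / 2 := by
    funext ω; ring
  rw [key]
  exact ((h1.sub h2).sub h3).div_const 2

/-- Quasi-optimality of the minimizer in one step of the RDBDPbis scheme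
(driver independent of `z`): if `U*` minimizes `E[|A - U + h f(X,U)|²]` over `S`, then
`‖V - U*‖_{L²} ≤ ((1 + Lh)/(1 - Lh)) inf_{U ∈ S} ‖V - U‖_{L²}`. -/
theorem stmt16 {Ω : Type*} [m0 : MeasurableSpace Ω] (μ : Measure Ω) [IsProbabilityMeasure μ]
    (G : MeasurableSpace Ω) (hG : G ≤ m0)
    (q : ℕ) (X : Ω → EuclideanSpace ℝ (Fin q)) (hX : StronglyMeasurable[G] X)
    (f : EuclideanSpace ℝ (Fin q) → ℝ → ℝ) (L : ℝ≥0)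
    (hfm : Measurable (Function.uncurry f))
    (hfL : ∀ x, LipschitzWith L (f x))
    (hf0 : MemLp (fun ω => f (X ω) 0) 2 μ)
    (h : ℝ) (hh : 0 < h) (hhL : h * (L : ℝ) < 1)
    (A : Ω → ℝ) (hA : MemLp A 2 μ)
    (V : Ω → ℝ) (hVm : StronglyMeasurable[G] V) (hV2 : MemLp V 2 μ)
    (hV : V =ᵐ[μ] fun ω => (μ[A|G]) ω + h * f (X ω) (V ω))
    (S : Set (Ω → ℝ)) (hS : S.Nonempty)
    (hSm : ∀ U ∈ S, StronglyMeasurable[G] U ∧ MemLp U 2 μ)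
    (Ustar : Ω → ℝ) (hUstar : Ustar ∈ S)
    (hmin : ∀ U ∈ S,
      (∫ ω, (A ω - Ustar ω + h * f (X ω) (Ustar ω)) ^ 2 ∂μ) ≤
        ∫ ω, (A ω - U ω + h * f (X ω) (U ω)) ^ 2 ∂μ) :
    (∫ ω, (V ω - Ustar ω) ^ 2 ∂μ) ^ (1 / 2 : ℝ) ≤
      ((1 + (L : ℝ) * h) / (1 - (L : ℝ) * h)) *
        sInf ((fun U : Ω → ℝ => (∫ ω, (V ω - U ω) ^ 2 ∂μ) ^ (1 / 2 : ℝ)) '' S) := by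
  classical
  obtain ⟨hU'm, hU'2⟩ := hSm Ustar hUstar
  have hpos : (0:ℝ) < 1 - (L : ℝ) * h := by
    have : (L : ℝ) * h = h * (L : ℝ) := mul_comm _ _
    linarith
  have hpos' : (0:ℝ) < 1 + (L : ℝ) * h := by positivity
  haveI : SigmaFinite (μ.trim hG) := inferInstance
  -- measurability of ω ↦ f (X ω) (U ω)
  have hXmG : Measurable[G] X := hX.measurable
  have hfXm : ∀ (U : Ω → ℝ), StronglyMeasurable[G] U →
      StronglyMeasurable[G] (fun ω => f (X ω) (U ω)) := fun U hU =>
    (hfm.comp (hXmG.prodMk hU.measurable)).stronglyMeasurable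
  -- L² bound for ω ↦ f (X ω) (U ω)
  have hfX2 : ∀ (U : Ω → ℝ), StronglyMeasurable[G] U → MemLp U 2 μ →
      MemLp (fun ω => f (X ω) (U ω)) 2 μ := by
    intro U hUm hU2
    have hgm : MemLp (fun ω => ‖f (X ω) 0‖ + (L : ℝ) * ‖U ω‖) 2 μ :=
      hf0.norm.add (hU2.norm.const_mul _)
    refine hgm.of_le (((hfXm U hUm).mono hG).aestronglyMeasurable)
      (Filter.Eventually.of_forall fun ω => ?_)
    have hd := (hfL (X ω)).dist_le_mul (U ω) 0
    simp only [Real.dist_eq, sub_zero] at hd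
    have h1 : |f (X ω) (U ω)| ≤ |f (X ω) 0| + (L : ℝ) * |U ω| := by
      have h2 := abs_add_le (f (X ω) 0) (f (X ω) (U ω) - f (X ω) 0)
      simp only [add_sub_cancel] at h2
      linarith
    have h0 : |f (X ω) 0| + (L : ℝ) * |U ω| ≤ |(|f (X ω) 0| + (L : ℝ) * |U ω|)| :=
      le_abs_self _
    simpa [Real.norm_eq_abs] using h1.trans h0
  -- L² membership of P U and D U
  have hP2 : ∀ (U : Ω → ℝ), StronglyMeasurable[G] U → MemLp U 2 μ →
      MemLp (fun ω => A ω - U ω + h * f (X ω) (U ω)) 2 μ := fun U hUm hU2 =>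
    (hA.sub hU2).add ((hfX2 U hUm hU2).const_mul h)
  have hD2 : ∀ (U : Ω → ℝ), StronglyMeasurable[G] U → MemLp U 2 μ →
      MemLp (fun ω => V ω - U ω - h * (f (X ω) (V ω) - f (X ω) (U ω))) 2 μ :=
    fun U hUm hU2 =>
    (hV2.sub hU2).sub (((hfX2 V hVm hV2).sub (hfX2 U hUm hU2)).const_mul h)
  have hDm : ∀ (U : Ω → ℝ), StronglyMeasurable[G] U →
      StronglyMeasurable[G] (fun ω => V ω - U ω - h * (f (X ω) (V ω) - f (X ω) (U ω))) :=
    fun U hUm =>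
    (hVm.sub hUm).sub (((hfXm V hVm).sub (hfXm U hUm)).const_mul h)
  -- orthogonality of A - E[A|G] against G-measurable L² functions
  have horth : ∀ (W : Ω → ℝ), StronglyMeasurable[G] W → MemLp W 2 μ →
      Integrable (fun ω => W ω * (A ω - (μ[A|G]) ω)) μ ∧
      (∫ ω, W ω * (A ω - (μ[A|G]) ω) ∂μ) = 0 := by
    intro W hWm hW2
    have hWA : Integrable (W * A) μ := aux_integrable_mul hW2 hA
    have hAint : Integrable A μ := hA.integrable one_le_two
    have hpull : μ[W * A|G] =ᵐ[μ] W * μ[A|G] :=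
      condExp_mul_of_stronglyMeasurable_left hWm hWA hAint
    have hWcA : Integrable (W * μ[A|G]) μ := integrable_condExp.congr hpull
    have h1 : ∫ ω, (W * A) ω ∂μ = ∫ ω, (W * μ[A|G]) ω ∂μ := by
      have h0 : ∫ ω, (μ[W * A|G]) ω ∂μ = ∫ ω, (W * A) ω ∂μ := integral_condExp hG
      rw [← h0]
      exact integral_congr_ae hpull
    have heq : (fun ω => W ω * (A ω - (μ[A|G]) ω)) =
        fun ω => (W * A) ω - (W * μ[A|G]) ω := by
      funext ω; simp only [Pi.mul_apply]; ring
    constructor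
    · rw [heq]; exact hWA.sub hWcA
    · rw [heq, integral_sub hWA hWcA, h1, sub_self]
  -- key inequality between the "D" integrals
  have hkey : ∀ U ∈ S,
      (∫ ω, (V ω - Ustar ω - h * (f (X ω) (V ω) - f (X ω) (Ustar ω))) ^ 2 ∂μ) ≤
      ∫ ω, (V ω - U ω - h * (f (X ω) (V ω) - f (X ω) (U ω))) ^ 2 ∂μ := by
    intro U hU
    obtain ⟨hUm, hU2⟩ := hSm U hU
    set D1 : Ω → ℝ := fun ω => V ω - Ustar ω - h * (f (X ω) (V ω) - f (X ω) (Ustar ω))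
      with hD1def
    set D2 : Ω → ℝ := fun ω => V ω - U ω - h * (f (X ω) (V ω) - f (X ω) (U ω)) with hD2def
    set P1 : Ω → ℝ := fun ω => A ω - Ustar ω + h * f (X ω) (Ustar ω) with hP1def
    set P2 : Ω → ℝ := fun ω => A ω - U ω + h * f (X ω) (U ω) with hP2def
    set W : Ω → ℝ := fun ω => 2 * (D1 ω - D2 ω) with hWdef
    have hD1sq : Integrable (fun ω => D1 ω ^ 2) μ := (hD2 Ustar hU'm hU'2).integrable_sq
    have hD2sq : Integrable (fun ω => D2 ω ^ 2) μ := (hD2 U hUm hU2).integrable_sq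
    have hP1sq : Integrable (fun ω => P1 ω ^ 2) μ := (hP2 Ustar hU'm hU'2).integrable_sq
    have hP2sq : Integrable (fun ω => P2 ω ^ 2) μ := (hP2 U hUm hU2).integrable_sq
    have hWm : StronglyMeasurable[G] W :=
      (((hDm Ustar hU'm).sub (hDm U hUm)).const_mul 2)
    have hW2 : MemLp W 2 μ :=
      (((hD2 Ustar hU'm hU'2).sub (hD2 U hUm hU2)).const_mul 2)
    obtain ⟨hWBint, hWB0⟩ := horth W hWm hW2
    have hae : ∀ᵐ ω ∂μ, P1 ω ^ 2 - P2 ω ^ 2 =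
        (D1 ω ^ 2 - D2 ω ^ 2) + W ω * (A ω - (μ[A|G]) ω) := by
      filter_upwards [hV] with ω hω
      have hVeq : V ω = (μ[A|G]) ω + h * f (X ω) (V ω) := hω
      have h1 : P1 ω = (A ω - (μ[A|G]) ω) + D1 ω := by
        simp only [hP1def, hD1def]
        linear_combination -hVeq
      have h2 : P2 ω = (A ω - (μ[A|G]) ω) + D2 ω := by
        simp only [hP2def, hD2def]
        linear_combination -hVeq
      simp only [hWdef]
      rw [h1, h2]; ring
    have hsplit : (∫ ω, P1 ω ^ 2 ∂μ) - ∫ ω, P2 ω ^ 2 ∂μ =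
        (∫ ω, D1 ω ^ 2 ∂μ) - ∫ ω, D2 ω ^ 2 ∂μ := by
      have e1 : (∫ ω, P1 ω ^ 2 ∂μ) - ∫ ω, P2 ω ^ 2 ∂μ
          = ∫ ω, (P1 ω ^ 2 - P2 ω ^ 2) ∂μ := (integral_sub hP1sq hP2sq).symm
      have e2 : ∫ ω, (P1 ω ^ 2 - P2 ω ^ 2) ∂μ
          = ∫ ω, ((D1 ω ^ 2 - D2 ω ^ 2) + W ω * (A ω - (μ[A|G]) ω)) ∂μ :=
        integral_congr_ae hae
      have hsubint : Integrable (fun ω => D1 ω ^ 2 - D2 ω ^ 2) μ := hD1sq.sub hD2sq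
      rw [e1, e2, integral_add hsubint hWBint, integral_sub hD1sq hD2sq, hWB0, add_zero]
    have hPle : (∫ ω, P1 ω ^ 2 ∂μ) ≤ ∫ ω, P2 ω ^ 2 ∂μ := hmin U hU
    linarith
  -- pointwise Lipschitz sandwich bounds
  have hlow : ∀ ω, (1 - (L : ℝ) * h) ^ 2 * (V ω - Ustar ω) ^ 2 ≤
      (V ω - Ustar ω - h * (f (X ω) (V ω) - f (X ω) (Ustar ω))) ^ 2 := by
    intro ω
    have hd := (hfL (X ω)).dist_le_mul (V ω) (Ustar ω)
    simp only [Real.dist_eq] at hd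
    have h3 := abs_sub_abs_le_abs_sub (V ω - Ustar ω)
      (h * (f (X ω) (V ω) - f (X ω) (Ustar ω)))
    have h2 : |h * (f (X ω) (V ω) - f (X ω) (Ustar ω))| ≤
        h * ((L : ℝ) * |V ω - Ustar ω|) := by
      rw [abs_mul, abs_of_pos hh]
      exact mul_le_mul_of_nonneg_left hd hh.le
    have habs := abs_nonneg (V ω - Ustar ω)
    have h1 : (1 - (L : ℝ) * h) * |V ω - Ustar ω| ≤
        |V ω - Ustar ω - h * (f (X ω) (V ω) - f (X ω) (Ustar ω))| := by nlinarith
    have h4 : 0 ≤ (1 - (L : ℝ) * h) * |V ω - Ustar ω| := by positivity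
    calc (1 - (L : ℝ) * h) ^ 2 * (V ω - Ustar ω) ^ 2
        = ((1 - (L : ℝ) * h) * |V ω - Ustar ω|) ^ 2 := by rw [mul_pow, sq_abs]
      _ ≤ |V ω - Ustar ω - h * (f (X ω) (V ω) - f (X ω) (Ustar ω))| ^ 2 :=
          pow_le_pow_left₀ h4 h1 2
      _ = (V ω - Ustar ω - h * (f (X ω) (V ω) - f (X ω) (Ustar ω))) ^ 2 := sq_abs _
  have hup : ∀ (U : Ω → ℝ) (ω : Ω),
      (V ω - U ω - h * (f (X ω) (V ω) - f (X ω) (U ω))) ^ 2 ≤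
      (1 + (L : ℝ) * h) ^ 2 * (V ω - U ω) ^ 2 := by
    intro U ω
    have hd := (hfL (X ω)).dist_le_mul (V ω) (U ω)
    simp only [Real.dist_eq] at hd
    have h3 := abs_sub (V ω - U ω) (h * (f (X ω) (V ω) - f (X ω) (U ω)))
    have h2 : |h * (f (X ω) (V ω) - f (X ω) (U ω))| ≤ h * ((L : ℝ) * |V ω - U ω|) := by
      rw [abs_mul, abs_of_pos hh]
      exact mul_le_mul_of_nonneg_left hd hh.le
    have habs := abs_nonneg (V ω - U ω)
    have h1 : |V ω - U ω - h * (f (X ω) (V ω) - f (X ω) (U ω))| ≤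
        (1 + (L : ℝ) * h) * |V ω - U ω| := by nlinarith
    calc (V ω - U ω - h * (f (X ω) (V ω) - f (X ω) (U ω))) ^ 2
        = |V ω - U ω - h * (f (X ω) (V ω) - f (X ω) (U ω))| ^ 2 := (sq_abs _).symm
      _ ≤ ((1 + (L : ℝ) * h) * |V ω - U ω|) ^ 2 := pow_le_pow_left₀ (abs_nonneg _) h1 2
      _ = (1 + (L : ℝ) * h) ^ 2 * (V ω - U ω) ^ 2 := by rw [mul_pow, sq_abs]
  -- per-element bound in L² norm
  set r : ℝ := (1 + (L : ℝ) * h) / (1 - (L : ℝ) * h) with hrdef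
  have hr : 0 < r := div_pos hpos' hpos
  have hIs : ∀ U ∈ S, (∫ ω, (V ω - Ustar ω) ^ 2 ∂μ) ^ (1 / 2 : ℝ) ≤
      r * (∫ ω, (V ω - U ω) ^ 2 ∂μ) ^ (1 / 2 : ℝ) := by
    intro U hU
    obtain ⟨hUm, hU2⟩ := hSm U hU
    have hIUint : Integrable (fun ω => (V ω - U ω) ^ 2) μ := (hV2.sub hU2).integrable_sq
    have hIUsint : Integrable (fun ω => (V ω - Ustar ω) ^ 2) μ :=
      (hV2.sub hU'2).integrable_sq
    have hc1 : (1 - (L : ℝ) * h) ^ 2 * ∫ ω, (V ω - Ustar ω) ^ 2 ∂μ ≤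
        ∫ ω, (V ω - Ustar ω - h * (f (X ω) (V ω) - f (X ω) (Ustar ω))) ^ 2 ∂μ := by
      rw [← integral_const_mul]
      exact integral_mono (hIUsint.const_mul _) ((hD2 Ustar hU'm hU'2).integrable_sq)
        fun ω => hlow ω
    have hc2 : (∫ ω, (V ω - U ω - h * (f (X ω) (V ω) - f (X ω) (U ω))) ^ 2 ∂μ) ≤
        (1 + (L : ℝ) * h) ^ 2 * ∫ ω, (V ω - U ω) ^ 2 ∂μ := by
      rw [← integral_const_mul]
      exact integral_mono ((hD2 U hUm hU2).integrable_sq) (hIUint.const_mul _)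
        fun ω => hup U ω
    have hmain : (∫ ω, (V ω - Ustar ω) ^ 2 ∂μ) ≤ r ^ 2 * ∫ ω, (V ω - U ω) ^ 2 ∂μ := by
      have hc := (hc1.trans (hkey U hU)).trans hc2
      rw [hrdef, div_pow, div_mul_eq_mul_div, le_div_iff₀ (by positivity)]
      nlinarith
    have hIUnn : 0 ≤ ∫ ω, (V ω - U ω) ^ 2 ∂μ := integral_nonneg fun ω => sq_nonneg _
    rw [← Real.sqrt_eq_rpow, ← Real.sqrt_eq_rpow]
    calc Real.sqrt (∫ ω, (V ω - Ustar ω) ^ 2 ∂μ)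
        ≤ Real.sqrt (r ^ 2 * ∫ ω, (V ω - U ω) ^ 2 ∂μ) := Real.sqrt_le_sqrt hmain
      _ = r * Real.sqrt (∫ ω, (V ω - U ω) ^ 2 ∂μ) := by
          rw [Real.sqrt_mul (sq_nonneg r), Real.sqrt_sq hr.le]
  -- pass to the infimum
  have hTne : ((fun U : Ω → ℝ => (∫ ω, (V ω - U ω) ^ 2 ∂μ) ^ (1 / 2 : ℝ)) '' S).Nonempty :=
    hS.image _
  have hle : (∫ ω, (V ω - Ustar ω) ^ 2 ∂μ) ^ (1 / 2 : ℝ) / r ≤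
      sInf ((fun U : Ω → ℝ => (∫ ω, (V ω - U ω) ^ 2 ∂μ) ^ (1 / 2 : ℝ)) '' S) := by
    refine le_csInf hTne ?_
    rintro t ⟨U, hU, rfl⟩
    rw [div_le_iff₀ hr]
    exact (hIs U hU).trans_eq (mul_comm _ _)
  rw [div_le_iff₀ hr] at hle
  calc (∫ ω, (V ω - Ustar ω) ^ 2 ∂μ) ^ (1 / 2 : ℝ)
      ≤ sInf ((fun U : Ω → ℝ => (∫ ω, (V ω - U ω) ^ 2 ∂μ) ^ (1 / 2 : ℝ)) '' S) * r := hle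
    _ = r * sInf ((fun U : Ω → ℝ => (∫ ω, (V ω - U ω) ^ 2 ∂μ) ^ (1 / 2 : ℝ)) '' S) :=
        mul_comm _ _
end

section
/- Let (Ω, F, P) be a probability space with a filtration G₀ ⊆ G₁ ⊆ … ⊆ G_N ⊆ F, let T > 0, N ≥ 1, h := T/N, and let X_i be G_i-measurable ℝ^q-valued random variables. Let f : ℝ^q × ℝ → ℝ be measurable and Lipschitz in its second argument with constant L uniformly in x, with f(X_i, 0) ∈ L² for all i, and let g : ℝ^q → ℝ be measurable with g(X_i) ∈ L² for all i. Assume h L ≤ 1/2. Define the reference scheme: Y_N := g(X_N), and for i = N−1, …, 0, Ỹ_i the G_i-measurable solution of Ỹ_i = E[Y_{i+1} | G_i] + h f(X_i, Ỹ_i), and Y_i := max(Ỹ_i, g(X_i)). Define the approximate scheme: Û_N := g(X_N), and for i = N−1, …, 0, let S_i be a nonempty set of G_i-measurable L² random variables, let U*_i ∈ S_i minimize U ↦ E[ |Û_{i+1} − U + h f(X_i, U)|² ] over S_i, and set Û_i := max(U*_i, g(X_i)); let V_i be the G_i-measurable solution of V_i = E[Û_{i+1} | G_i] + h f(X_i,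 V_i) and ε_i := inf_{U ∈ S_i} E[|V_i − U|²]. Then there exists a constant C > 0, depending only on L and T (and not on N), such that max_{0 ≤ i ≤ N} ‖Y_i − Û_i‖_{L²} ≤ C Σ_{i=0}^{N−1} √(ε_i). -/
open MeasureTheory
open scoped NNReal

namespace Stmt17Aux

variable {Ω : Type} {m m0 : MeasurableSpace Ω} {μ : Measure Ω}

lemma int_mul {f g : Ω → ℝ} (hf : MemLp f 2 μ) (hg : MemLp g 2 μ) :
    Integrable (fun ω => f ω * g ω) μ := by
  refine Integrable.mono' ((hf.integrable_sq.add hg.integrable_sq).div_const 2)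
    (hf.aestronglyMeasurable.mul hg.aestronglyMeasurable) (ae_of_all _ fun ω => ?_)
  have h2 : 2 * |f ω| * |g ω| ≤ |f ω| ^ 2 + |g ω| ^ 2 := two_mul_le_add_sq _ _
  have h3 : ‖f ω * g ω‖ = |f ω| * |g ω| := by rw [Real.norm_eq_abs, abs_mul]
  rw [h3]
  simp only [Pi.add_apply, sq_abs] at *
  nlinarith [sq_nonneg (f ω), sq_nonneg (g ω)]

/-- The L² "norm" as a real number, matching the statement's expression. -/
noncomputable def l2 (μ : Measure Ω) (f : Ω → ℝ) : ℝ := (∫ ω, f ω ^ 2 ∂μ) ^ (1/2 : ℝ)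

lemma l2_eq_sqrt (f : Ω → ℝ) : l2 μ f = Real.sqrt (∫ ω, f ω ^ 2 ∂μ) := by
  rw [l2, Real.sqrt_eq_rpow]

lemma l2_nonneg (f : Ω → ℝ) : 0 ≤ l2 μ f := by
  rw [l2_eq_sqrt]; exact Real.sqrt_nonneg _

lemma l2_sq (f : Ω → ℝ) : l2 μ f ^ 2 = ∫ ω, f ω ^ 2 ∂μ := by
  rw [l2_eq_sqrt, Real.sq_sqrt (integral_nonneg fun ω => sq_nonneg _)]

lemma l2_congr {f g : Ω → ℝ} (h : f =ᵐ[μ] g) : l2 μ f = l2 μ g := by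
  rw [l2, l2, integral_congr_ae (h.mono fun ω e => by rw [e])]

lemma l2_mono {f g : Ω → ℝ} (hg : MemLp g 2 μ) (h : ∀ᵐ ω ∂μ, |f ω| ≤ |g ω|) :
    l2 μ f ≤ l2 μ g := by
  rw [l2_eq_sqrt, l2_eq_sqrt]
  refine Real.sqrt_le_sqrt (integral_mono_of_nonneg (ae_of_all _ fun ω => sq_nonneg _)
    hg.integrable_sq (h.mono fun ω hω => ?_))
  calc f ω ^ 2 = |f ω| ^ 2 := (sq_abs _).symm
    _ ≤ |g ω| ^ 2 := by gcongr
    _ = g ω ^ 2 := sq_abs _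

lemma l2_const_mul (c : ℝ) (f : Ω → ℝ) : l2 μ (fun ω => c * f ω) = |c| * l2 μ f := by
  rw [l2_eq_sqrt, l2_eq_sqrt]
  simp_rw [mul_pow]
  rw [integral_const_mul, Real.sqrt_mul (sq_nonneg c), Real.sqrt_sq_eq_abs]

lemma l2_eq_norm {f : Ω → ℝ} (hf : MemLp f 2 μ) : l2 μ f = ‖hf.toLp f‖ := by
  have h1 : ‖hf.toLp f‖ ^ 2 = ∫ ω, f ω ^ 2 ∂μ := by
    rw [← real_inner_self_eq_norm_sq]
    rw [MeasureTheory.L2.inner_def]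
    refine integral_congr_ae ((hf.coeFn_toLp).mono fun ω hω => ?_)
    simp [hω, sq]
  rw [l2_eq_sqrt, ← h1, Real.sqrt_sq (norm_nonneg _)]

lemma l2_add_le {f g : Ω → ℝ} (hf : MemLp f 2 μ) (hg : MemLp g 2 μ) :
    l2 μ (fun ω => f ω + g ω) ≤ l2 μ f + l2 μ g := by
  have hfg : MemLp (fun ω => f ω + g ω) 2 μ := hf.add hg
  rw [l2_eq_norm hf, l2_eq_norm hg, l2_eq_norm hfg]
  have : hfg.toLp _ = hf.toLp f + hg.toLp g := by
    rw [← MemLp.toLp_add]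
    rfl
  rw [this]
  exact norm_add_le _ _

lemma l2_sub_le {f g : Ω → ℝ} (hf : MemLp f 2 μ) (hg : MemLp g 2 μ) :
    l2 μ (fun ω => f ω - g ω) ≤ l2 μ f + l2 μ g := by
  have := l2_add_le (μ := μ) hf hg.neg
  simp only [Pi.neg_apply, ← sub_eq_add_neg] at this
  calc l2 μ (fun ω => f ω - g ω) ≤ l2 μ f + l2 μ (fun ω => -g ω) := this
    _ = l2 μ f + l2 μ g := by
        congr 1
        rw [l2_eq_sqrt, l2_eq_sqrt]; simp

lemma integral_add_sq_of_orth {f g : Ω → ℝ} (hf : MemLp f 2 μ) (hg : MemLp g 2 μ)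
    (h : ∫ ω, f ω * g ω ∂μ = 0) :
    ∫ ω, (f ω + g ω) ^ 2 ∂μ = (∫ ω, f ω ^ 2 ∂μ) + ∫ ω, g ω ^ 2 ∂μ := by
  have e : ∀ ω, (f ω + g ω) ^ 2 = f ω ^ 2 + (2 * (f ω * g ω) + g ω ^ 2) := by intro ω; ring
  have h1 : Integrable (fun ω => 2 * (f ω * g ω) + g ω ^ 2) μ :=
    Integrable.add ((int_mul hf hg).const_mul 2) hg.integrable_sq
  simp_rw [e]
  rw [integral_add hf.integrable_sq h1,
    integral_add ((int_mul hf hg).const_mul 2) hg.integrable_sq, integral_const_mul, h]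
  ring

lemma l2_le_of_orth {f g : Ω → ℝ} (hf : MemLp f 2 μ) (hg : MemLp g 2 μ)
    (h : ∫ ω, f ω * g ω ∂μ = 0) : l2 μ f ≤ l2 μ (fun ω => f ω + g ω) := by
  rw [l2_eq_sqrt, l2_eq_sqrt]
  refine Real.sqrt_le_sqrt ?_
  rw [integral_add_sq_of_orth hf hg h]
  exact le_add_of_nonneg_right (integral_nonneg fun ω => sq_nonneg _)

lemma integral_mul_condexp [IsProbabilityMeasure μ] (hm : m ≤ m0) {W Z : Ω → ℝ}
    (hWm : StronglyMeasurable[m] W) (hW : MemLp W 2 μ) (hZ : MemLp Z 2 μ) :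
    ∫ ω, W ω * Z ω ∂μ = ∫ ω, W ω * (μ[Z|m]) ω ∂μ := by
  haveI : IsFiniteMeasure (μ.trim hm) := isFiniteMeasure_trim hm
  have hint : Integrable (W * Z) μ := int_mul hW hZ
  have h1 : μ[W * Z|m] =ᵐ[μ] W * μ[Z|m] :=
    condExp_mul_of_stronglyMeasurable_left hWm hint (hZ.integrable one_le_two)
  calc ∫ ω, W ω * Z ω ∂μ = ∫ ω, (W * Z) ω ∂μ := rfl
    _ = ∫ ω, (μ[W * Z|m]) ω ∂μ := (integral_condExp hm).symm
    _ = ∫ ω, (W * μ[Z|m]) ω ∂μ := integral_congr_ae h1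
    _ = ∫ ω, W ω * (μ[Z|m]) ω ∂μ := rfl

/-- `∫ W·Z = ∫ W·Z'` whenever `Z' =ᵐ μ[Z|m]` and `W` is `m`-measurable, all in L². -/
lemma integral_mul_eq_of_condexp [IsProbabilityMeasure μ] (hm : m ≤ m0) {W Z Z' : Ω → ℝ}
    (hWm : StronglyMeasurable[m] W) (hW : MemLp W 2 μ) (hZ : MemLp Z 2 μ)
    (hZ' : Z' =ᵐ[μ] μ[Z|m]) :
    ∫ ω, W ω * Z ω ∂μ = ∫ ω, W ω * Z' ω ∂μ := by
  rw [integral_mul_condexp hm hWm hW hZ]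
  refine integral_congr_ae ?_
  filter_upwards [hZ'] with ω e
  rw [e]

end Stmt17Aux
open Stmt17Aux

namespace Stmt17Aux
variable {Ω : Type} {m0 : MeasurableSpace Ω} {μ : Measure Ω}

lemma memLp_max {f g : Ω → ℝ} (hf : MemLp f 2 μ) (hg : MemLp g 2 μ) :
    MemLp (fun ω => max (f ω) (g ω)) 2 μ := by
  refine MemLp.of_le (hf.norm.add hg.norm)
    ((hf.aestronglyMeasurable.aemeasurable.max hg.aestronglyMeasurable.aemeasurable).aestronglyMeasurable)
    (ae_of_all _ fun ω => ?_)
  simp only [Real.norm_eq_abs]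
  have h1 : |max (f ω) (g ω)| ≤ |f ω| + |g ω| := by
    rcases max_cases (f ω) (g ω) with ⟨e, _⟩ | ⟨e, _⟩ <;> rw [e]
    · exact le_add_of_nonneg_right (abs_nonneg _)
    · exact le_add_of_nonneg_left (abs_nonneg _)
  calc |max (f ω) (g ω)| ≤ |f ω| + |g ω| := h1
    _ ≤ |(|f ω| + |g ω|)| := le_abs_self _

end Stmt17Aux

set_option maxHeartbeats 2000000 in
/-- Consistency of the RDBDPbis scheme for variational inequalities (driver independent
of `z`): the reference reflected backward scheme `(Y_i)` and the approximate scheme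
`(Û_i)`, obtained by minimizing the one-step quadratic loss over classes `S_i` followed
by reflection, satisfy `max_{i ≤ N} ‖Y_i - Û_i‖_{L²} ≤ C ∑_{i<N} √(ε_i)` for a constant
`C` depending only on `L` and `T` (not on `N`). -/
theorem stmt17 (q : ℕ) (L : ℝ≥0) (T : ℝ) (hT : 0 < T) :
    ∃ C : ℝ, 0 < C ∧
      ∀ (Ω : Type) (m0 : MeasurableSpace Ω) (μ : Measure Ω), IsProbabilityMeasure μ →
      ∀ N : ℕ, 1 ≤ N →
      ∀ h : ℝ, h = T / N → h * (L : ℝ) ≤ 1 / 2 →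
      ∀ G : ℕ → MeasurableSpace Ω, (∀ i, i ≤ N → G i ≤ m0) →
        (∀ i j, i ≤ j → j ≤ N → G i ≤ G j) →
      ∀ X : ℕ → Ω → EuclideanSpace ℝ (Fin q),
        (∀ i, i ≤ N → StronglyMeasurable[G i] (X i)) →
      ∀ f : EuclideanSpace ℝ (Fin q) → ℝ → ℝ,
        Measurable (Function.uncurry f) →
        (∀ x, LipschitzWith L (f x)) →
        (∀ i, i ≤ N → MemLp (fun ω => f (X i ω) 0) 2 μ) →
      ∀ g : EuclideanSpace ℝ (Fin q) → ℝ, Measurable g →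
        (∀ i, i ≤ N → MemLp (fun ω => g (X i ω)) 2 μ) →
      ∀ Y Ytil : ℕ → Ω → ℝ,
        Y N = (fun ω => g (X N ω)) →
        (∀ i < N, StronglyMeasurable[G i] (Ytil i) ∧ MemLp (Ytil i) 2 μ ∧
          Ytil i =ᵐ[μ] fun ω => (μ[Y (i + 1)|G i]) ω + h * f (X i ω) (Ytil i ω)) →
        (∀ i < N, Y i = fun ω => max (Ytil i ω) (g (X i ω))) →
      ∀ S : ℕ → Set (Ω → ℝ),
        (∀ i < N, (S i).Nonempty) →
        (∀ i < N, ∀ U ∈ S i, StronglyMeasurable[G i] U ∧ MemLp U 2 μ) →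
      ∀ Uhat Ustar V : ℕ → Ω → ℝ,
        Uhat N = (fun ω => g (X N ω)) →
        (∀ i < N, Ustar i ∈ S i ∧ ∀ U ∈ S i,
          (∫ ω, (Uhat (i + 1) ω - Ustar i ω + h * f (X i ω) (Ustar i ω)) ^ 2 ∂μ) ≤
            ∫ ω, (Uhat (i + 1) ω - U ω + h * f (X i ω) (U ω)) ^ 2 ∂μ) →
        (∀ i < N, Uhat i = fun ω => max (Ustar i ω) (g (X i ω))) →
        (∀ i < N, StronglyMeasurable[G i] (V i) ∧ MemLp (V i) 2 μ ∧
          V i =ᵐ[μ] fun ω => (μ[Uhat (i + 1)|G i]) ω + h * f (X i ω) (V i ω)) →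
      ∀ ε : ℕ → ℝ,
        (∀ i < N, ε i = sInf ((fun U : Ω → ℝ => ∫ ω, (V i ω - U ω) ^ 2 ∂μ) '' S i)) →
      ∀ i ≤ N, (∫ ω, (Y i ω - Uhat i ω) ^ 2 ∂μ) ^ (1 / 2 : ℝ) ≤
        C * ∑ j ∈ Finset.range N, Real.sqrt (ε j) := by
  refine ⟨3 * Real.exp (2 * (L : ℝ) * T), by positivity, ?_⟩
  intro Ω m0 μ hprob N hN h hh hhL G hGle hGmono X hX f hfmeas hfLip hf0 g hgmeas hgX
    Y Ytil hYN hYtil hYmax S hSne hSmeas Uhat Ustar V hUN hUmin hUmax hV ε hε i hiN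
  -- basic numeric facts
  have hNpos : (0 : ℝ) < N := by exact_mod_cast hN
  have hh0 : 0 < h := by rw [hh]; positivity
  have hL0 : (0 : ℝ) ≤ L := L.coe_nonneg
  have hhL0 : 0 ≤ h * (L : ℝ) := mul_nonneg hh0.le hL0
  have h1mhl : (0 : ℝ) < 1 - h * L := by linarith
  -- measurability and integrability package
  have hgXsm : ∀ j, j ≤ N → StronglyMeasurable[G j] (fun ω => g (X j ω)) := fun j hj =>
    (hgmeas.comp (hX j hj).measurable).stronglyMeasurable
  have hYL2 : ∀ j, j ≤ N → MemLp (Y j) 2 μ := by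
    intro j hj
    rcases eq_or_lt_of_le hj with rfl | hj'
    · rw [hYN]; exact hgX j le_rfl
    · rw [hYmax j hj']
      exact memLp_max (hYtil j hj').2.1 (hgX j hj)
  have hUhatL2 : ∀ j, j ≤ N → MemLp (Uhat j) 2 μ := by
    intro j hj
    rcases eq_or_lt_of_le hj with rfl | hj'
    · rw [hUN]; exact hgX j le_rfl
    · rw [hUmax j hj']
      exact memLp_max (hSmeas j hj' _ (hUmin j hj').1).2 (hgX j hj)
  -- composition with the driver
  have hfc : ∀ j, j < N → ∀ U : Ω → ℝ, StronglyMeasurable[G j] U → MemLp U 2 μ →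
      StronglyMeasurable[G j] (fun ω => f (X j ω) (U ω)) ∧
        MemLp (fun ω => f (X j ω) (U ω)) 2 μ := by
    intro j hj U hUsm hUL2
    have hXm : Measurable[G j] (X j) := (hX j hj.le).measurable
    have hUm : Measurable[G j] U := hUsm.measurable
    have hc : Measurable[G j] (fun ω => f (X j ω) (U ω)) := hfmeas.comp (hXm.prodMk hUm)
    refine ⟨hc.stronglyMeasurable, ?_⟩
    have hmaj : MemLp (fun ω => ‖f (X j ω) 0‖ + (L : ℝ) * ‖U ω‖) 2 μ :=
      (hf0 j hj.le).norm.add (hUL2.norm.const_mul _)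
    refine MemLp.of_le hmaj (((hc.mono (hGle j hj.le) le_rfl).stronglyMeasurable).aestronglyMeasurable)
      (ae_of_all _ fun ω => ?_)
    have hl : |f (X j ω) (U ω) - f (X j ω) 0| ≤ (L : ℝ) * |U ω| := by
      have := (hfLip (X j ω)).dist_le_mul (U ω) 0
      rwa [Real.dist_eq, Real.dist_eq, sub_zero] at this
    simp only [Real.norm_eq_abs]
    have h1 : |f (X j ω) (U ω)| ≤ |f (X j ω) 0| + (L : ℝ) * |U ω| := by
      have := abs_sub_abs_le_abs_sub (f (X j ω) (U ω)) (f (X j ω) 0)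
      linarith
    have h2 : 0 ≤ |f (X j ω) 0| + (L : ℝ) * |U ω| := by positivity
    calc |f (X j ω) (U ω)| ≤ |f (X j ω) 0| + (L : ℝ) * |U ω| := h1
      _ ≤ |(|f (X j ω) 0| + (L : ℝ) * |U ω|)| := le_abs_self _
  -- single-step estimate
  have step : ∀ j, j < N →
      l2 μ (fun ω => Y j ω - Uhat j ω) ≤
        (1 - h * L)⁻¹ * l2 μ (fun ω => Y (j + 1) ω - Uhat (j + 1) ω) + 3 * Real.sqrt (ε j) := by
    intro j hj
    obtain ⟨hYt_sm, hYt_L2, hYt_eq⟩ := hYtil j hj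
    obtain ⟨hV_sm, hV_L2, hV_eq⟩ := hV j hj
    obtain ⟨hUs_mem, hUs_min⟩ := hUmin j hj
    obtain ⟨hUs_sm, hUs_L2⟩ := hSmeas j hj _ hUs_mem
    have hGj : G j ≤ m0 := hGle j hj.le
    obtain ⟨hfV_sm, hfV_L2⟩ := hfc j hj (V j) hV_sm hV_L2
    obtain ⟨hfYt_sm, hfYt_L2⟩ := hfc j hj (Ytil j) hYt_sm hYt_L2
    obtain ⟨hfUs_sm, hfUs_L2⟩ := hfc j hj (Ustar j) hUs_sm hUs_L2
    have hY1 : MemLp (Y (j+1)) 2 μ := hYL2 (j+1) (by omega)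
    have hU1 : MemLp (Uhat (j+1)) 2 μ := hUhatL2 (j+1) (by omega)
    -- pointwise Lipschitz bound
    have hlip : ∀ (P Q : Ω → ℝ) (ω : Ω),
        |f (X j ω) (P ω) - f (X j ω) (Q ω)| ≤ (L : ℝ) * |P ω - Q ω| := by
      intro P Q ω
      have := (hfLip (X j ω)).dist_le_mul (P ω) (Q ω)
      rwa [Real.dist_eq, Real.dist_eq] at this
    -- the conditional-expectation representatives
    have hW0_sm : StronglyMeasurable[G j] (fun ω => V j ω - h * f (X j ω) (V j ω)) :=
      hV_sm.sub (hfV_sm.const_mul h)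
    have hW0_L2 : MemLp (fun ω => V j ω - h * f (X j ω) (V j ω)) 2 μ :=
      hV_L2.sub (hfV_L2.const_mul h)
    have hW0_eq : (fun ω => V j ω - h * f (X j ω) (V j ω)) =ᵐ[μ] μ[Uhat (j+1)|G j] := by
      filter_upwards [hV_eq] with ω e
      linarith [e]
    have hW1_sm : StronglyMeasurable[G j] (fun ω => Ytil j ω - h * f (X j ω) (Ytil j ω)) :=
      hYt_sm.sub (hfYt_sm.const_mul h)
    have hW1_L2 : MemLp (fun ω => Ytil j ω - h * f (X j ω) (Ytil j ω)) 2 μ :=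
      hYt_L2.sub (hfYt_L2.const_mul h)
    have hW1_eq : (fun ω => Ytil j ω - h * f (X j ω) (Ytil j ω)) =ᵐ[μ] μ[Y (j+1)|G j] := by
      filter_upwards [hYt_eq] with ω e
      linarith [e]
    -- difference of the representatives
    have hWd_sm : StronglyMeasurable[G j] (fun ω =>
        (Ytil j ω - h * f (X j ω) (Ytil j ω)) - (V j ω - h * f (X j ω) (V j ω))) :=
      hW1_sm.sub hW0_sm
    have hWd_L2 : MemLp (fun ω =>
        (Ytil j ω - h * f (X j ω) (Ytil j ω)) - (V j ω - h * f (X j ω) (V j ω))) 2 μ :=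
      hW1_L2.sub hW0_L2
    -- (B2) contraction through the conditional expectation, via Pythagoras
    have hB2 : l2 μ (fun ω =>
          (Ytil j ω - h * f (X j ω) (Ytil j ω)) - (V j ω - h * f (X j ω) (V j ω))) ≤
        l2 μ (fun ω => Y (j+1) ω - Uhat (j+1) ω) := by
      have e1 : ∫ ω, ((Ytil j ω - h * f (X j ω) (Ytil j ω)) - (V j ω - h * f (X j ω) (V j ω)))
            * Y (j+1) ω ∂μ
          = ∫ ω, ((Ytil j ω - h * f (X j ω) (Ytil j ω)) - (V j ω - h * f (X j ω) (V j ω)))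
            * (Ytil j ω - h * f (X j ω) (Ytil j ω)) ∂μ :=
        integral_mul_eq_of_condexp hGj hWd_sm hWd_L2 hY1 hW1_eq
      have e2 : ∫ ω, ((Ytil j ω - h * f (X j ω) (Ytil j ω)) - (V j ω - h * f (X j ω) (V j ω)))
            * Uhat (j+1) ω ∂μ
          = ∫ ω, ((Ytil j ω - h * f (X j ω) (Ytil j ω)) - (V j ω - h * f (X j ω) (V j ω)))
            * (V j ω - h * f (X j ω) (V j ω)) ∂μ :=
        integral_mul_eq_of_condexp hGj hWd_sm hWd_L2 hU1 hW0_eq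
      have orth : ∫ ω, ((Ytil j ω - h * f (X j ω) (Ytil j ω)) - (V j ω - h * f (X j ω) (V j ω)))
          * ((Y (j+1) ω - Uhat (j+1) ω) -
            ((Ytil j ω - h * f (X j ω) (Ytil j ω)) - (V j ω - h * f (X j ω) (V j ω)))) ∂μ = 0 := by
        have e5 : ∀ ω : Ω,
            ((Ytil j ω - h * f (X j ω) (Ytil j ω)) - (V j ω - h * f (X j ω) (V j ω)))
              * ((Y (j+1) ω - Uhat (j+1) ω) -
                ((Ytil j ω - h * f (X j ω) (Ytil j ω)) - (V j ω - h * f (X j ω) (V j ω))))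
            = (((Ytil j ω - h * f (X j ω) (Ytil j ω)) - (V j ω - h * f (X j ω) (V j ω)))
                * Y (j+1) ω
              - ((Ytil j ω - h * f (X j ω) (Ytil j ω)) - (V j ω - h * f (X j ω) (V j ω)))
                * Uhat (j+1) ω)
              - (((Ytil j ω - h * f (X j ω) (Ytil j ω)) - (V j ω - h * f (X j ω) (V j ω)))
                * (Ytil j ω - h * f (X j ω) (Ytil j ω))
                - ((Ytil j ω - h * f (X j ω) (Ytil j ω)) - (V j ω - h * f (X j ω) (V j ω)))
                * (V j ω - h * f (X j ω) (V j ω))) := by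
          intro ω; ring
        have iWY : Integrable (fun ω =>
            ((Ytil j ω - h * f (X j ω) (Ytil j ω)) - (V j ω - h * f (X j ω) (V j ω)))
              * Y (j+1) ω) μ := int_mul hWd_L2 hY1
        have iWU : Integrable (fun ω =>
            ((Ytil j ω - h * f (X j ω) (Ytil j ω)) - (V j ω - h * f (X j ω) (V j ω)))
              * Uhat (j+1) ω) μ := int_mul hWd_L2 hU1
        have iW1 : Integrable (fun ω =>
            ((Ytil j ω - h * f (X j ω) (Ytil j ω)) - (V j ω - h * f (X j ω) (V j ω)))
              * (Ytil j ω - h * f (X j ω) (Ytil j ω))) μ := int_mul hWd_L2 hW1_L2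
        have iW0 : Integrable (fun ω =>
            ((Ytil j ω - h * f (X j ω) (Ytil j ω)) - (V j ω - h * f (X j ω) (V j ω)))
              * (V j ω - h * f (X j ω) (V j ω))) μ := int_mul hWd_L2 hW0_L2
        have iA : Integrable (fun ω =>
            ((Ytil j ω - h * f (X j ω) (Ytil j ω)) - (V j ω - h * f (X j ω) (V j ω)))
              * Y (j+1) ω
            - ((Ytil j ω - h * f (X j ω) (Ytil j ω)) - (V j ω - h * f (X j ω) (V j ω)))
              * Uhat (j+1) ω) μ := iWY.sub iWU
        have iB : Integrable (fun ω =>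
            ((Ytil j ω - h * f (X j ω) (Ytil j ω)) - (V j ω - h * f (X j ω) (V j ω)))
              * (Ytil j ω - h * f (X j ω) (Ytil j ω))
            - ((Ytil j ω - h * f (X j ω) (Ytil j ω)) - (V j ω - h * f (X j ω) (V j ω)))
              * (V j ω - h * f (X j ω) (V j ω))) μ := iW1.sub iW0
        simp_rw [e5]
        rw [integral_sub iA iB, integral_sub iWY iWU, integral_sub iW1 iW0, e1, e2]
        ring
      have hres : l2 μ (fun ω =>
          (Ytil j ω - h * f (X j ω) (Ytil j ω)) - (V j ω - h * f (X j ω) (V j ω))) ≤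
          l2 μ (fun ω =>
            ((Ytil j ω - h * f (X j ω) (Ytil j ω)) - (V j ω - h * f (X j ω) (V j ω)))
              + ((Y (j+1) ω - Uhat (j+1) ω) -
                ((Ytil j ω - h * f (X j ω) (Ytil j ω)) - (V j ω - h * f (X j ω) (V j ω))))) :=
        l2_le_of_orth hWd_L2 ((hY1.sub hU1).sub hWd_L2) orth
      have efun : (fun ω =>
          ((Ytil j ω - h * f (X j ω) (Ytil j ω)) - (V j ω - h * f (X j ω) (V j ω)))
            + ((Y (j+1) ω - Uhat (j+1) ω) -
              ((Ytil j ω - h * f (X j ω) (Ytil j ω)) - (V j ω - h * f (X j ω) (V j ω)))))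
          = fun ω => Y (j+1) ω - Uhat (j+1) ω := by
        funext ω; ring
      rwa [efun] at hres
    -- (B1) implicit step is a contraction
    have hB1 : (1 - h * L) * l2 μ (fun ω => Ytil j ω - V j ω) ≤
        l2 μ (fun ω =>
          (Ytil j ω - h * f (X j ω) (Ytil j ω)) - (V j ω - h * f (X j ω) (V j ω))) := by
      have tri : l2 μ (fun ω => Ytil j ω - V j ω) ≤
          l2 μ (fun ω =>
            (Ytil j ω - h * f (X j ω) (Ytil j ω)) - (V j ω - h * f (X j ω) (V j ω)))
          + l2 μ (fun ω => h * (f (X j ω) (Ytil j ω) - f (X j ω) (V j ω))) := by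
        have e : (fun ω => Ytil j ω - V j ω) = fun ω =>
            ((Ytil j ω - h * f (X j ω) (Ytil j ω)) - (V j ω - h * f (X j ω) (V j ω)))
            + (h * (f (X j ω) (Ytil j ω) - f (X j ω) (V j ω))) := by
          funext ω; ring
        rw [e]
        exact l2_add_le hWd_L2 ((hfYt_L2.sub hfV_L2).const_mul h)
      have lips : l2 μ (fun ω => h * (f (X j ω) (Ytil j ω) - f (X j ω) (V j ω))) ≤
          (h * L) * l2 μ (fun ω => Ytil j ω - V j ω) := by
        have hb : ∀ ω, |h * (f (X j ω) (Ytil j ω) - f (X j ω) (V j ω))| ≤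
            |(h * (L : ℝ)) * (Ytil j ω - V j ω)| := by
          intro ω
          rw [abs_mul, abs_mul, abs_of_nonneg hh0.le, abs_of_nonneg hhL0]
          calc h * |f (X j ω) (Ytil j ω) - f (X j ω) (V j ω)|
              ≤ h * ((L : ℝ) * |Ytil j ω - V j ω|) :=
                mul_le_mul_of_nonneg_left (hlip (Ytil j) (V j) ω) hh0.le
            _ = (h * (L : ℝ)) * |Ytil j ω - V j ω| := by ring
        calc l2 μ (fun ω => h * (f (X j ω) (Ytil j ω) - f (X j ω) (V j ω)))
            ≤ l2 μ (fun ω => (h * (L : ℝ)) * (Ytil j ω - V j ω)) :=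
              l2_mono ((hYt_L2.sub hV_L2).const_mul _) (ae_of_all _ hb)
          _ = |h * (L : ℝ)| * l2 μ (fun ω => Ytil j ω - V j ω) := l2_const_mul _ _
          _ = (h * (L : ℝ)) * l2 μ (fun ω => Ytil j ω - V j ω) := by
              rw [abs_of_nonneg hhL0]
      nlinarith [l2_nonneg (μ := μ) (fun ω => Ytil j ω - V j ω)]
    -- (B3) the minimizer is close to the implicit solution
    have hAorth : ∀ U : Ω → ℝ, StronglyMeasurable[G j] U → MemLp U 2 μ →
        (∫ ω, (Uhat (j+1) ω - U ω + h * f (X j ω) (U ω)) ^ 2 ∂μ)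
          = (∫ ω, (Uhat (j+1) ω - (V j ω - h * f (X j ω) (V j ω))) ^ 2 ∂μ)
            + ∫ ω, (V j ω - U ω + h * (f (X j ω) (U ω) - f (X j ω) (V j ω))) ^ 2 ∂μ := by
      intro U hUsm hUL2
      obtain ⟨hfU_sm, hfU_L2⟩ := hfc j hj U hUsm hUL2
      have hA_sm : StronglyMeasurable[G j]
          (fun ω => V j ω - U ω + h * (f (X j ω) (U ω) - f (X j ω) (V j ω))) :=
        (hV_sm.sub hUsm).add ((hfU_sm.sub hfV_sm).const_mul h)
      have hA_L2 : MemLp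
          (fun ω => V j ω - U ω + h * (f (X j ω) (U ω) - f (X j ω) (V j ω))) 2 μ :=
        (hV_L2.sub hUL2).add ((hfU_L2.sub hfV_L2).const_mul h)
      have hD_L2 : MemLp (fun ω => Uhat (j+1) ω - (V j ω - h * f (X j ω) (V j ω))) 2 μ :=
        hU1.sub hW0_L2
      have eA : ∫ ω, (V j ω - U ω + h * (f (X j ω) (U ω) - f (X j ω) (V j ω)))
            * Uhat (j+1) ω ∂μ
          = ∫ ω, (V j ω - U ω + h * (f (X j ω) (U ω) - f (X j ω) (V j ω)))
            * (V j ω - h * f (X j ω) (V j ω)) ∂μ :=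
        integral_mul_eq_of_condexp hGj hA_sm hA_L2 hU1 hW0_eq
      have horth : ∫ ω, (Uhat (j+1) ω - (V j ω - h * f (X j ω) (V j ω)))
          * (V j ω - U ω + h * (f (X j ω) (U ω) - f (X j ω) (V j ω))) ∂μ = 0 := by
        have e' : ∀ ω : Ω, (Uhat (j+1) ω - (V j ω - h * f (X j ω) (V j ω)))
            * (V j ω - U ω + h * (f (X j ω) (U ω) - f (X j ω) (V j ω)))
            = (V j ω - U ω + h * (f (X j ω) (U ω) - f (X j ω) (V j ω))) * Uhat (j+1) ω
              - (V j ω - U ω + h * (f (X j ω) (U ω) - f (X j ω) (V j ω)))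
                * (V j ω - h * f (X j ω) (V j ω)) := by
          intro ω; ring
        have iAU : Integrable (fun ω =>
            (V j ω - U ω + h * (f (X j ω) (U ω) - f (X j ω) (V j ω))) * Uhat (j+1) ω) μ :=
          int_mul hA_L2 hU1
        have iAW : Integrable (fun ω =>
            (V j ω - U ω + h * (f (X j ω) (U ω) - f (X j ω) (V j ω)))
              * (V j ω - h * f (X j ω) (V j ω))) μ := int_mul hA_L2 hW0_L2
        simp_rw [e']
        rw [integral_sub iAU iAW, eA, sub_self]
      have e : (fun ω => Uhat (j+1) ω - U ω + h * f (X j ω) (U ω))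
          = fun ω => (Uhat (j+1) ω - (V j ω - h * f (X j ω) (V j ω)))
            + (V j ω - U ω + h * (f (X j ω) (U ω) - f (X j ω) (V j ω))) := by
        funext ω; ring
      have e2 : (fun ω => (Uhat (j+1) ω - U ω + h * f (X j ω) (U ω)) ^ 2)
          = fun ω => ((Uhat (j+1) ω - (V j ω - h * f (X j ω) (V j ω)))
            + (V j ω - U ω + h * (f (X j ω) (U ω) - f (X j ω) (V j ω)))) ^ 2 := by
        funext ω; ring
      calc ∫ ω, (Uhat (j+1) ω - U ω + h * f (X j ω) (U ω)) ^ 2 ∂μ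
          = ∫ ω, ((Uhat (j+1) ω - (V j ω - h * f (X j ω) (V j ω)))
            + (V j ω - U ω + h * (f (X j ω) (U ω) - f (X j ω) (V j ω)))) ^ 2 ∂μ := by rw [e2]
        _ = _ := integral_add_sq_of_orth hD_L2 hA_L2 horth
    have hεnn : 0 ≤ ε j := by
      rw [hε j hj]
      apply Real.sInf_nonneg
      rintro x ⟨U, _, rfl⟩
      exact integral_nonneg fun ω => sq_nonneg _
    have hlow : (1 - h * L) * l2 μ (fun ω => V j ω - Ustar j ω) ≤
        l2 μ (fun ω => V j ω - Ustar j ω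
          + h * (f (X j ω) (Ustar j ω) - f (X j ω) (V j ω))) := by
      have tri : l2 μ (fun ω => V j ω - Ustar j ω) ≤
          l2 μ (fun ω => V j ω - Ustar j ω
            + h * (f (X j ω) (Ustar j ω) - f (X j ω) (V j ω)))
          + l2 μ (fun ω => h * (f (X j ω) (V j ω) - f (X j ω) (Ustar j ω))) := by
        have e : (fun ω => V j ω - Ustar j ω) = fun ω =>
            (V j ω - Ustar j ω + h * (f (X j ω) (Ustar j ω) - f (X j ω) (V j ω)))
            + (h * (f (X j ω) (V j ω) - f (X j ω) (Ustar j ω))) := by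
          funext ω; ring
        rw [e]
        exact l2_add_le ((hV_L2.sub hUs_L2).add ((hfUs_L2.sub hfV_L2).const_mul h))
          ((hfV_L2.sub hfUs_L2).const_mul h)
      have lips : l2 μ (fun ω => h * (f (X j ω) (V j ω) - f (X j ω) (Ustar j ω))) ≤
          (h * L) * l2 μ (fun ω => V j ω - Ustar j ω) := by
        have hb : ∀ ω, |h * (f (X j ω) (V j ω) - f (X j ω) (Ustar j ω))| ≤
            |(h * (L : ℝ)) * (V j ω - Ustar j ω)| := by
          intro ω
          rw [abs_mul, abs_mul, abs_of_nonneg hh0.le, abs_of_nonneg hhL0]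
          calc h * |f (X j ω) (V j ω) - f (X j ω) (Ustar j ω)|
              ≤ h * ((L : ℝ) * |V j ω - Ustar j ω|) :=
                mul_le_mul_of_nonneg_left (hlip (V j) (Ustar j) ω) hh0.le
            _ = (h * (L : ℝ)) * |V j ω - Ustar j ω| := by ring
        calc l2 μ (fun ω => h * (f (X j ω) (V j ω) - f (X j ω) (Ustar j ω)))
            ≤ l2 μ (fun ω => (h * (L : ℝ)) * (V j ω - Ustar j ω)) :=
              l2_mono ((hV_L2.sub hUs_L2).const_mul _) (ae_of_all _ hb)
          _ = |h * (L : ℝ)| * l2 μ (fun ω => V j ω - Ustar j ω) := l2_const_mul _ _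
          _ = (h * (L : ℝ)) * l2 μ (fun ω => V j ω - Ustar j ω) := by
              rw [abs_of_nonneg hhL0]
      nlinarith [l2_nonneg (μ := μ) (fun ω => V j ω - Ustar j ω)]
    have hVU : ∀ U ∈ S j, l2 μ (fun ω => V j ω - Ustar j ω) ≤
        3 * l2 μ (fun ω => V j ω - U ω) := by
      intro U hUS
      obtain ⟨hUsm, hUL2⟩ := hSmeas j hj U hUS
      obtain ⟨hfU_sm, hfU_L2⟩ := hfc j hj U hUsm hUL2
      -- minimality transfers to the A-parts
      have hmin := hUs_min U hUS
      rw [hAorth (Ustar j) hUs_sm hUs_L2, hAorth U hUsm hUL2] at hmin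
      have hAle : l2 μ (fun ω => V j ω - Ustar j ω
            + h * (f (X j ω) (Ustar j ω) - f (X j ω) (V j ω))) ≤
          l2 μ (fun ω => V j ω - U ω + h * (f (X j ω) (U ω) - f (X j ω) (V j ω))) := by
        rw [l2_eq_sqrt, l2_eq_sqrt]
        exact Real.sqrt_le_sqrt (by linarith)
      have hup : l2 μ (fun ω => V j ω - U ω + h * (f (X j ω) (U ω) - f (X j ω) (V j ω))) ≤
          (1 + h * L) * l2 μ (fun ω => V j ω - U ω) := by
        have tri : l2 μ (fun ω => V j ω - U ω + h * (f (X j ω) (U ω) - f (X j ω) (V j ω))) ≤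
            l2 μ (fun ω => V j ω - U ω)
            + l2 μ (fun ω => h * (f (X j ω) (U ω) - f (X j ω) (V j ω))) :=
          l2_add_le (hV_L2.sub hUL2) ((hfU_L2.sub hfV_L2).const_mul h)
        have lips : l2 μ (fun ω => h * (f (X j ω) (U ω) - f (X j ω) (V j ω))) ≤
            (h * L) * l2 μ (fun ω => V j ω - U ω) := by
          have hb : ∀ ω, |h * (f (X j ω) (U ω) - f (X j ω) (V j ω))| ≤
              |(h * (L : ℝ)) * (V j ω - U ω)| := by
            intro ω
            rw [abs_mul, abs_mul, abs_of_nonneg hh0.le, abs_of_nonneg hhL0]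
            have h1 := hlip U (V j) ω
            rw [abs_sub_comm (U ω) (V j ω)] at h1
            calc h * |f (X j ω) (U ω) - f (X j ω) (V j ω)|
                ≤ h * ((L : ℝ) * |V j ω - U ω|) := mul_le_mul_of_nonneg_left h1 hh0.le
              _ = (h * (L : ℝ)) * |V j ω - U ω| := by ring
          calc l2 μ (fun ω => h * (f (X j ω) (U ω) - f (X j ω) (V j ω)))
              ≤ l2 μ (fun ω => (h * (L : ℝ)) * (V j ω - U ω)) :=
                l2_mono ((hV_L2.sub hUL2).const_mul _) (ae_of_all _ hb)
            _ = |h * (L : ℝ)| * l2 μ (fun ω => V j ω - U ω) := l2_const_mul _ _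
            _ = (h * (L : ℝ)) * l2 μ (fun ω => V j ω - U ω) := by rw [abs_of_nonneg hhL0]
        linarith
      have hx := l2_nonneg (μ := μ) (fun ω => V j ω - Ustar j ω)
      have hy := l2_nonneg (μ := μ) (fun ω => V j ω - U ω)
      nlinarith [mul_nonneg (by linarith : (0:ℝ) ≤ 1/2 - h * L) hx]
    have hB3 : l2 μ (fun ω => V j ω - Ustar j ω) ≤ 3 * Real.sqrt (ε j) := by
      have hx0 : 0 ≤ l2 μ (fun ω => V j ω - Ustar j ω) := l2_nonneg _
      have key : ∀ c, ε j < c →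
          l2 μ (fun ω => V j ω - Ustar j ω) / 3 ≤ Real.sqrt c := by
        intro c hc
        have hne : ((fun U : Ω → ℝ => ∫ ω, (V j ω - U ω) ^ 2 ∂μ) '' S j).Nonempty :=
          (hSne j hj).image _
        have hc' : sInf ((fun U : Ω → ℝ => ∫ ω, (V j ω - U ω) ^ 2 ∂μ) '' S j) < c := by
          rw [← hε j hj]; exact hc
        obtain ⟨y, hy, hyc⟩ := exists_lt_of_csInf_lt hne hc'
        obtain ⟨U, hUS, rfl⟩ := hy
        have h1 := hVU U hUS
        have h2 : l2 μ (fun ω => V j ω - U ω) ≤ Real.sqrt c := by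
          rw [l2_eq_sqrt]
          exact Real.sqrt_le_sqrt hyc.le
        linarith
      have hsq : (l2 μ (fun ω => V j ω - Ustar j ω) / 3) ^ 2 ≤ ε j := by
        refine le_of_forall_gt_imp_ge_of_dense fun c hc => ?_
        have h1 := key c hc
        have h2 : 0 ≤ l2 μ (fun ω => V j ω - Ustar j ω) / 3 := by positivity
        calc (l2 μ (fun ω => V j ω - Ustar j ω) / 3) ^ 2 ≤ Real.sqrt c ^ 2 := by gcongr
          _ = c := Real.sq_sqrt (hεnn.trans hc.le)
      have h3 : l2 μ (fun ω => V j ω - Ustar j ω) / 3 ≤ Real.sqrt (ε j) := by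
        have h2 : 0 ≤ l2 μ (fun ω => V j ω - Ustar j ω) / 3 := by positivity
        calc l2 μ (fun ω => V j ω - Ustar j ω) / 3
            = Real.sqrt ((l2 μ (fun ω => V j ω - Ustar j ω) / 3) ^ 2) :=
              (Real.sqrt_sq h2).symm
          _ ≤ Real.sqrt (ε j) := Real.sqrt_le_sqrt hsq
      linarith
    -- combine
    have tri2 : l2 μ (fun ω => Ytil j ω - Ustar j ω) ≤
        l2 μ (fun ω => Ytil j ω - V j ω) + l2 μ (fun ω => V j ω - Ustar j ω) := by
      have e : (fun ω => Ytil j ω - Ustar j ω) = fun ω =>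
          (Ytil j ω - V j ω) + (V j ω - Ustar j ω) := by funext ω; ring
      rw [e]
      exact l2_add_le (hYt_L2.sub hV_L2) (hV_L2.sub hUs_L2)
    have hrefl : l2 μ (fun ω => Y j ω - Uhat j ω) ≤
        l2 μ (fun ω => Ytil j ω - Ustar j ω) := by
      refine l2_mono (hYt_L2.sub hUs_L2) (ae_of_all _ fun ω => ?_)
      rw [congrFun (hYmax j hj) ω, congrFun (hUmax j hj) ω]
      exact abs_max_sub_max_le_abs _ _ _
    have hx : l2 μ (fun ω => Ytil j ω - V j ω) ≤
        (1 - h * L)⁻¹ * l2 μ (fun ω => Y (j+1) ω - Uhat (j+1) ω) := by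
      rw [inv_eq_one_div, div_mul_eq_mul_div, le_div_iff₀ h1mhl]
      nlinarith [hB1, hB2]
    linarith
  -- terminal value
  have haN : l2 μ (fun ω => Y N ω - Uhat N ω) = 0 := by
    have e : (fun ω => Y N ω - Uhat N ω) = fun _ => (0 : ℝ) := by
      funext ω; rw [hYN, hUN]; ring
    rw [e, l2_eq_sqrt]
    simp
  -- numeric facts for the recursion
  have hκ1 : (1 : ℝ) ≤ (1 - h * L)⁻¹ := (one_le_inv₀ h1mhl).2 (by linarith)
  have hκ0 : (0 : ℝ) ≤ (1 - h * L)⁻¹ := inv_nonneg.2 h1mhl.le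
  have main : ∀ k, k ≤ N →
      l2 μ (fun ω => Y (N - k) ω - Uhat (N - k) ω) ≤
        3 * ((1 - h * L)⁻¹) ^ k * ∑ m ∈ Finset.Ico (N - k) N, Real.sqrt (ε m) := by
    intro k
    induction k with
    | zero =>
      intro _
      simpa [haN] using le_refl (0 : ℝ)
    | succ k ih =>
      intro hk
      have hk' : k ≤ N := by omega
      have hjN : N - (k + 1) < N := by omega
      have hsucc : N - (k + 1) + 1 = N - k := by omega
      have h1 := step (N - (k + 1)) hjN
      rw [hsucc] at h1
      have h2 := ih hk'
      have hsum : ∑ m ∈ Finset.Ico (N - (k + 1)) N, Real.sqrt (ε m)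
          = Real.sqrt (ε (N - (k + 1))) + ∑ m ∈ Finset.Ico (N - k) N, Real.sqrt (ε m) := by
        rw [← hsucc]
        exact Finset.sum_eq_sum_Ico_succ_bot (by omega) _
      have hκpow1 : (1 : ℝ) ≤ ((1 - h * L)⁻¹) ^ (k + 1) := one_le_pow₀ hκ1
      have hsq : 0 ≤ Real.sqrt (ε (N - (k + 1))) := Real.sqrt_nonneg _
      have hsumnn : 0 ≤ ∑ m ∈ Finset.Ico (N - k) N, Real.sqrt (ε m) :=
        Finset.sum_nonneg fun m _ => Real.sqrt_nonneg _
      calc l2 μ (fun ω => Y (N - (k + 1)) ω - Uhat (N - (k + 1)) ω)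
          ≤ (1 - h * L)⁻¹ * l2 μ (fun ω => Y (N - k) ω - Uhat (N - k) ω)
            + 3 * Real.sqrt (ε (N - (k + 1))) := h1
        _ ≤ (1 - h * L)⁻¹ * (3 * ((1 - h * L)⁻¹) ^ k
              * ∑ m ∈ Finset.Ico (N - k) N, Real.sqrt (ε m))
            + 3 * Real.sqrt (ε (N - (k + 1))) := by
            have := mul_le_mul_of_nonneg_left h2 hκ0
            linarith
        _ ≤ 3 * ((1 - h * L)⁻¹) ^ (k + 1)
            * ∑ m ∈ Finset.Ico (N - (k + 1)) N, Real.sqrt (ε m) := by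
            rw [hsum]
            have h3 : 3 * Real.sqrt (ε (N - (k + 1))) ≤
                3 * ((1 - h * L)⁻¹) ^ (k + 1) * Real.sqrt (ε (N - (k + 1))) := by
              nlinarith [hκpow1, hsq]
            have h4 : (1 - h * L)⁻¹ * (3 * ((1 - h * L)⁻¹) ^ k
                  * ∑ m ∈ Finset.Ico (N - k) N, Real.sqrt (ε m))
                = 3 * ((1 - h * L)⁻¹) ^ (k + 1)
                  * ∑ m ∈ Finset.Ico (N - k) N, Real.sqrt (ε m) := by ring
            rw [mul_add, ← h4]
            linarith [h3]
  have hiNk : N - (N - i) = i := by omega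
  have hmain := main (N - i) (by omega)
  rw [hiNk] at hmain
  have hκN : ((1 - h * L)⁻¹) ^ (N - i) ≤ Real.exp (2 * (L : ℝ) * T) := by
    have hκe : (1 - h * L)⁻¹ ≤ Real.exp (2 * (h * L)) := by
      have h1 : (1 - h * L)⁻¹ ≤ 1 + 2 * (h * L) := by
        rw [inv_eq_one_div, div_le_iff₀ h1mhl]
        nlinarith
      have h2 := Real.add_one_le_exp (2 * (h * L))
      linarith
    calc ((1 - h * L)⁻¹) ^ (N - i) ≤ ((1 - h * L)⁻¹) ^ N :=
          pow_le_pow_right₀ hκ1 (by omega)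
      _ ≤ (Real.exp (2 * (h * L))) ^ N := pow_le_pow_left₀ hκ0 hκe N
      _ = Real.exp (N * (2 * (h * L))) := by rw [← Real.exp_nat_mul]
      _ = Real.exp (2 * (L : ℝ) * T) := by
          congr 1
          rw [hh]
          field_simp
  have hsub : ∑ m ∈ Finset.Ico i N, Real.sqrt (ε m) ≤
      ∑ m ∈ Finset.range N, Real.sqrt (ε m) := by
    rw [Finset.range_eq_Ico]
    exact Finset.sum_le_sum_of_subset_of_nonneg
      (Finset.Ico_subset_Ico (Nat.zero_le _) le_rfl) fun m _ _ => Real.sqrt_nonneg _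
  have hs0 : 0 ≤ ∑ m ∈ Finset.Ico i N, Real.sqrt (ε m) :=
    Finset.sum_nonneg fun m _ => Real.sqrt_nonneg _
  show l2 μ (fun ω => Y i ω - Uhat i ω) ≤ _
  calc l2 μ (fun ω => Y i ω - Uhat i ω)
      ≤ 3 * ((1 - h * L)⁻¹) ^ (N - i) * ∑ m ∈ Finset.Ico i N, Real.sqrt (ε m) := hmain
    _ ≤ 3 * Real.exp (2 * (L : ℝ) * T) * ∑ m ∈ Finset.range N, Real.sqrt (ε m) := by
        have hexp0 : (0:ℝ) ≤ Real.exp (2 * (L : ℝ) * T) := (Real.exp_pos _).le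
        have hp0 : (0:ℝ) ≤ ((1 - h * L)⁻¹) ^ (N - i) := pow_nonneg hκ0 _
        nlinarith [mul_le_mul hκN hsub hs0 hexp0]
end
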